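/- arXiv:2503.18412 — 5 statements merged into one kernel-verified Lean document; each statement's English description precedes it below -/
import Mathlib

section
/- If λ ∈ Y₊ then t_λ is the unique element of minimal length in the coset t_λ W_f; if λ ∈ −Y₊₊ then t_λ w∘ is the unique element of minimal length in the coset t_λ W_f (where w∘ is the longest element of W_f). -/
open scoped Classical TensorProduct

noncomputable section

namespace SemiInf

/-- The data of a root datum together with its (finite) Weyl group:
finite-rank free `ℤ`-modules `X` and `Y` with a pairing, a finite group `W`
acting on both, a finite set of roots with a subset of positive roots, and a
coroot map. The axioms are collected in `Ctx.IsRootDatum`. -/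
structure Ctx where
  X : Type
  Y : Type
  [addX : AddCommGroup X]
  [addY : AddCommGroup Y]
  W : Type
  [grpW : Group W]
  [finW : Fintype W]
  [actX : DistribMulAction W X]
  [actY : DistribMulAction W Y]
  pair : Y →+ X →+ ℤ
  roots : Finset X
  pos : Finset X
  coroot : X → Y

attribute [instance] Ctx.addX Ctx.addY Ctx.grpW Ctx.finW Ctx.actX Ctx.actY

namespace Ctx

variable (C : Ctx)

/-- The axioms of a root datum (free finite-rank lattices, perfect pairing,
finite reduced crystallographic root system with a system of positive roots),
with `W` its Weyl group acting faithfully on `X` and `Y`. -/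
structure IsRootDatum : Prop where
  free_X : Module.Free ℤ C.X
  finite_X : Module.Finite ℤ C.X
  free_Y : Module.Free ℤ C.Y
  finite_Y : Module.Finite ℤ C.Y
  perfect_left : Function.Bijective fun y : C.Y => C.pair y
  perfect_right : Function.Bijective fun x : C.X => C.pair.flip x
  pos_subset : C.pos ⊆ C.roots
  root_decomp : ∀ α ∈ C.roots, α ∈ C.pos ∨ -α ∈ C.pos
  pos_neg_disjoint : ∀ α ∈ C.pos, -α ∉ C.pos
  zero_not_root : (0 : C.X) ∉ C.roots
  reduced : ∀ α ∈ C.roots, ∀ n : ℤ, n • α ∈ C.roots → n = 1 ∨ n = -1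
  coroot_self : ∀ α ∈ C.roots, C.pair (C.coroot α) α = 2
  isReflection : ∀ α ∈ C.roots, ∃ s : C.W,
    (∀ x : C.X, s • x = x - C.pair (C.coroot α) x • α) ∧
    (∀ y : C.Y, s • y = y - C.pair y α • C.coroot α)
  weyl_gen : ∀ w : C.W, w ∈ Subgroup.closure {s : C.W | ∃ α ∈ C.roots,
    (∀ x : C.X, s • x = x - C.pair (C.coroot α) x • α) ∧
    (∀ y : C.Y, s • y = y - C.pair y α • C.coroot α)}
  faithful_X : ∀ w : C.W, (∀ x : C.X, w • x = x) → w = 1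
  faithful_Y : ∀ w : C.W, (∀ y : C.Y, w • y = y) → w = 1
  pair_inv : ∀ (w : C.W) (y : C.Y) (x : C.X), C.pair (w • y) (w • x) = C.pair y x
  roots_stable : ∀ (w : C.W), ∀ α ∈ C.roots, w • α ∈ C.roots
  smul_coroot : ∀ (w : C.W), ∀ α ∈ C.roots, w • C.coroot α = C.coroot (w • α)
  exists_regular_X : ∃ ξ : C.X, ∀ α ∈ C.pos, 0 < C.pair (C.coroot α) ξ
  exists_regular_Y : ∃ η : C.Y, ∀ α ∈ C.pos, 0 < C.pair η α

/-- The length function of the finite Weyl group: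
`ℓ(w) = #{α ∈ 𝔯₊ : w(α) ∈ −𝔯₊}`. -/
def lenW (w : C.W) : ℕ := (C.pos.filter fun α => -(w • α) ∈ C.pos).card

/-- `w` is the longest element of the finite Weyl group iff it maps every
positive root to a negative root. -/
def IsLongest (w : C.W) : Prop := ∀ α ∈ C.pos, -(w • α) ∈ C.pos

/-- The set `Y₊` of dominant cocharacters. -/
def Ypos : Set C.Y := {l | ∀ α ∈ C.pos, 0 ≤ C.pair l α}

/-- The set `Y₊₊` of strictly dominant cocharacters. -/
def Yppos : Set C.Y := {l | ∀ α ∈ C.pos, 0 < C.pair l α}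

/-- The action of `W` on `Multiplicative Y`, as a homomorphism to `MulAut`. -/
def φext : C.W →* MulAut (Multiplicative C.Y) where
  toFun w :=
    { toFun := fun y => Multiplicative.ofAdd (w • Multiplicative.toAdd y)
      invFun := fun y => Multiplicative.ofAdd (w⁻¹ • Multiplicative.toAdd y)
      left_inv := fun y => by simp
      right_inv := fun y => by simp
      map_mul' := fun a b => by simp [smul_add] }
  map_one' := by
    apply MulEquiv.ext
    intro y
    simp
  map_mul' w₁ w₂ := by
    apply MulEquiv.ext
    intro y
    simp [mul_smul]

/-- The extended affine Weyl group `W_ext = W_f ⋉ Y`. -/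
abbrev Wext : Type := Multiplicative C.Y ⋊[C.φext] C.W

/-- The translation element `t_λ ∈ W_ext` associated with `λ ∈ Y`. -/
def t (l : C.Y) : C.Wext := SemidirectProduct.inl (Multiplicative.ofAdd l)

/-- The canonical embedding of the finite Weyl group in `W_ext`. -/
def σ (w : C.W) : C.Wext := SemidirectProduct.inr w

/-- The length function on `W_ext`, defined by
`ℓ(w t_λ) = Σ_{α ∈ 𝔯₊, w(α) ∈ 𝔯₊} |⟨λ,α⟩| + Σ_{α ∈ 𝔯₊, w(α) ∈ −𝔯₊} |1 − ⟨λ,α⟩|`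
(an element `g` of the semidirect product equals `w t_λ` for `w = g.right`
and `λ = w⁻¹ • g.left`). -/
def len (g : C.Wext) : ℕ :=
  ∑ α ∈ C.pos,
    if g.right • α ∈ C.pos
      then (C.pair (g.right⁻¹ • Multiplicative.toAdd g.left) α).natAbs
      else ((1 : ℤ) - C.pair (g.right⁻¹ • Multiplicative.toAdd g.left) α).natAbs

/-- The coroot lattice `ℤ𝔯∨ ⊆ Y`. -/
def corootLattice : AddSubgroup C.Y := AddSubgroup.closure (C.coroot '' ↑C.roots)

/-- The affine Weyl group `W_aff = W_f ⋉ ℤ𝔯∨`, as a subgroup of `W_ext`. -/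
def Waff : Subgroup C.Wext :=
  Subgroup.closure ((fun l => C.t l) '' ↑C.corootLattice ∪ Set.range C.σ)

/-- The set of elements of length `1` of `W_aff` (the simple affine
reflections). -/
def Saff : Set C.Wext := {g | g ∈ C.Waff ∧ C.len g = 1}

/-- The set `Ω` of elements of length `0` of `W_ext`. -/
def OmegaSet : Set C.Wext := {g | C.len g = 0}

/-- The Bruhat order on `W_aff`: `u ≤ v` iff some reduced expression of `v`
(as a word in `S_aff`) admits a subword which is an expression of `u`. -/
def bruhatAff (u v : C.Wext) : Prop :=
  ∃ l : List C.Wext, (∀ s ∈ l, s ∈ C.Saff) ∧ l.prod = v ∧ l.length = C.len v ∧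
    ∃ l' : List C.Wext, l'.Sublist l ∧ l'.prod = u

/-- The Bruhat order on `W_ext`, extending the Bruhat order of `W_aff` by
`ω u ≤ ω' v` iff `ω = ω'` and `u ≤ v`, for `ω, ω' ∈ Ω` and `u, v ∈ W_aff`. -/
def bruhat (x y : C.Wext) : Prop :=
  ∃ ω u v : C.Wext, ω ∈ C.OmegaSet ∧ u ∈ C.Waff ∧ v ∈ C.Waff ∧
    x = ω * u ∧ y = ω * v ∧ C.bruhatAff u v

/-- The set `W_ext⁺` of `w ∈ W_ext` such that `ℓ(t_μ w) = ℓ(t_μ) + ℓ(w)` for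
every dominant `μ`. -/
def WextPlus : Set C.Wext :=
  {w | ∀ μ ∈ C.Ypos, C.len (C.t μ * w) = C.len (C.t μ) + C.len w}

/-- The semiinfinite order on `W_ext`. -/
def siLE (w y : C.Wext) : Prop :=
  ∃ μ : C.Y, C.t μ * w ∈ C.WextPlus ∧ C.t μ * y ∈ C.WextPlus ∧
    C.bruhat (C.t μ * w) (C.t μ * y)

/-- The rational vector space `ℚ ⊗ Y`. -/
abbrev QY : Type := ℚ ⊗[ℤ] C.Y

/-- The canonical map `Y → ℚ ⊗ Y`. -/
def ι : C.Y →ₗ[ℤ] C.QY := TensorProduct.mk ℤ ℚ C.Y 1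

/-- The finite set of positive coroots. -/
def posCoroots : Finset C.Y := C.pos.image C.coroot

/-- Half the sum of the positive coroots, as an element of `ℚ ⊗ Y`. -/
def rhoCheck : C.QY := (2⁻¹ : ℚ) ⊗ₜ[ℤ] (∑ β ∈ C.posCoroots, β)

/-- The set of Kostant partitions of `v ∈ ℚ ⊗ Y`: functions
`φ : 𝔯∨₊ → ℤ≥0` with `Σ_α φ(α)·α = v`. -/
def KostantSet (v : C.QY) : Set (↥C.posCoroots → ℕ) :=
  {φ | ∑ β : ↥C.posCoroots, (φ β) • C.ι (β : C.Y) = v}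

/-- Kostant's partition function. -/
def KostantP (v : C.QY) : ℕ := (C.KostantSet v).ncard

/-- The action of `w ∈ W` on `ℚ ⊗ Y`. -/
def actQ (w : C.W) : C.QY →ₗ[ℤ] C.QY :=
  LinearMap.lTensor ℚ ((DistribMulAction.toAddMonoidHom C.Y w).toIntLinearMap)

/-- The simple roots: positive roots which are not sums of two positive
roots. -/
def simpleRoots : Finset C.X :=
  C.pos.filter fun α => ¬ ∃ β ∈ C.pos, ∃ γ ∈ C.pos, α = β + γ

end Ctx

end SemiInf

/-!
Writing the elements of the coset as `t_λ u` with `u ∈ W_f`, the length formula and a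
reindexing of the positive roots along `u` give `ℓ(t_λ u) = Σ_{β>0} |⟨λ,β⟩| + ℓ(u)` for
dominant `λ` and `ℓ(t_λ u) = Σ_{β>0} |⟨λ,β⟩| - ℓ(u)` when `-λ` is strictly dominant. So the
minimum is attained exactly where `ℓ(u) = 0`, resp. `ℓ(u) = #𝔯₊`, and both reduce to the
fact that only `1 ∈ W_f` maps `𝔯₊` into itself.

That fact is proved as in Humphreys' treatment of finite reflection groups: with simple
roots the indecomposable positive roots, a simple reflection `s_δ` permutes `𝔯₊ ∖ {δ}`
(here by induction on the height `⟨η, -⟩` for a regular dominant `η`, which avoids linear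
independence of the simple roots), the simple reflections generate `W_f`, and by the
exchange condition a shortest word for an element preserving `𝔯₊` must be empty. Pairings
of roots with coroots are compared through a `W_f`-invariant positive definite form on `X`.
-/

namespace SemiInf

structure IsInvariantPosDefForm (G : Type*) {M : Type*} [Group G] [AddCommGroup M]
    [DistribMulAction G M] (B : LinearMap.BilinForm ℤ M) : Prop where
  symm : ∀ x y, B x y = B y x
  smul : ∀ (g : G) (x y : M), B (g • x) (g • y) = B x y
  pos : ∀ x, x ≠ 0 → 0 < B x x

theorem exists_isInvariantPosDefForm (G M : Type*) [Group G] [Fintype G] [AddCommGroup M]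
    [DistribMulAction G M] [Module.Free ℤ M] [Module.Finite ℤ M] :
    ∃ B : LinearMap.BilinForm ℤ M, IsInvariantPosDefForm G B := by
  let coords (g : G) : M →ₗ[ℤ] Module.Free.ChooseBasisIndex ℤ M → ℤ :=
    (Module.Free.chooseBasis ℤ M).equivFun.toLinearMap ∘ₗ
      (DistribSMul.toAddMonoidHom M g).toIntLinearMap
  have apply (x y : M) :
      (∑ g, (dotProductBilin ℤ ℤ).compl₁₂ (coords g) (coords g)) x y =
        ∑ g, coords g x ⬝ᵥ coords g y := by
    simp
  have dot_self_pos {v : Module.Free.ChooseBasisIndex ℤ M → ℤ} (hv : v ≠ 0) : 0 < v ⬝ᵥ v :=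
    lt_of_le_of_ne (Finset.sum_nonneg fun i _ => mul_self_nonneg (v i))
      (Ne.symm (dotProduct_self_eq_zero.not.mpr hv))
  refine ⟨∑ g, (dotProductBilin ℤ ℤ).compl₁₂ (coords g) (coords g), ⟨?_, ?_, ?_⟩⟩
  · intro x y
    simp only [apply, dotProduct_comm]
  · intro g x y
    simp only [apply]
    exact Fintype.sum_equiv (Equiv.mulRight g) _ _ fun g' => by simp [coords, mul_smul]
  · intro x hx
    rw [apply]
    refine lt_of_lt_of_le ?_ (Finset.single_le_sum (fun g _ => ?_) (Finset.mem_univ 1))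
    · exact dot_self_pos (by simpa [coords] using hx)
    · exact Finset.sum_nonneg fun i _ => mul_self_nonneg _

namespace Ctx

variable {C : Ctx}

-- The reflection is pinned down by its action on `X` since `W` acts faithfully;
-- it is the junk value `1` when no such element exists.
def reflection (C : Ctx) (α : C.X) : C.W :=
  if hs : ∃ s : C.W, ∀ x : C.X, s • x = x - C.pair (C.coroot α) x • α then hs.choose else 1

def simpleReflections (C : Ctx) : Set C.W := C.reflection '' C.simpleRoots

theorem mem_pos_of_mem_simpleRoots {δ : C.X} (hδ : δ ∈ C.simpleRoots) : δ ∈ C.pos :=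
  (Finset.mem_filter.1 hδ).1

theorem not_exists_add_of_mem_simpleRoots {δ : C.X} (hδ : δ ∈ C.simpleRoots) :
    ¬ ∃ β ∈ C.pos, ∃ γ ∈ C.pos, δ = β + γ :=
  (Finset.mem_filter.1 hδ).2

theorem exists_add_of_notMem_simpleRoots {α : C.X} (hα : α ∈ C.pos)
    (hα' : α ∉ C.simpleRoots) : ∃ β ∈ C.pos, ∃ γ ∈ C.pos, α = β + γ := by
  simpa [simpleRoots, hα] using hα'

theorem pos_induction_on_height (η : C.Y) (hη : ∀ α ∈ C.pos, 0 < C.pair η α)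
    {p : C.X → Prop}
    (step : ∀ β ∈ C.pos, (∀ γ ∈ C.pos, C.pair η γ < C.pair η β → p γ) → p β) :
    ∀ β ∈ C.pos, p β := by
  intro β
  induction hn : (C.pair η β).toNat using Nat.strong_induction_on generalizing β with
  | _ n ih =>
    intro hβ
    refine step β hβ fun γ hγ hlt => ih _ ?_ γ rfl hγ
    have := hη γ hγ
    omega

namespace IsRootDatum

theorem neg_mem_pos (h : C.IsRootDatum) {α : C.X} (hα : α ∈ C.roots) (hα' : α ∉ C.pos) :
    -α ∈ C.pos :=
  (h.root_decomp α hα).resolve_left hα'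

theorem smul_mem_roots (h : C.IsRootDatum) (w : C.W) {α : C.X} (hα : α ∈ C.pos) :
    w • α ∈ C.roots :=
  h.roots_stable w α (h.pos_subset hα)

theorem ne_zero_of_mem_roots (h : C.IsRootDatum) {α : C.X} (hα : α ∈ C.roots) : α ≠ 0 :=
  fun h0 => h.zero_not_root (h0 ▸ hα)

theorem pair_inv_smul (h : C.IsRootDatum) (w : C.W) (y : C.Y) (x : C.X) :
    C.pair (w⁻¹ • y) x = C.pair y (w • x) := by
  rw [← h.pair_inv w, smul_inv_smul]

theorem reflection_smul (h : C.IsRootDatum) {α : C.X} (hα : α ∈ C.roots) (x : C.X) :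
    C.reflection α • x = x - C.pair (C.coroot α) x • α := by
  have hs : ∃ s : C.W, ∀ x : C.X, s • x = x - C.pair (C.coroot α) x • α :=
    (h.isReflection α hα).imp fun _ hs => hs.1
  rw [reflection, dif_pos hs]
  exact hs.choose_spec x

theorem reflection_smul_self (h : C.IsRootDatum) {α : C.X} (hα : α ∈ C.roots) :
    C.reflection α • α = -α := by
  rw [h.reflection_smul hα, h.coroot_self α hα, two_smul]
  abel

theorem neg_mem_roots (h : C.IsRootDatum) {α : C.X} (hα : α ∈ C.roots) : -α ∈ C.roots :=
  h.reflection_smul_self hα ▸ h.roots_stable _ α hα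

theorem eq_reflection (h : C.IsRootDatum) {α : C.X} (hα : α ∈ C.roots) {s : C.W}
    (hs : ∀ x : C.X, s • x = x - C.pair (C.coroot α) x • α) : s = C.reflection α := by
  refine (inv_mul_eq_one.mp (h.faithful_X _ fun x => ?_)).symm
  rw [mul_smul, hs, ← h.reflection_smul hα, inv_smul_smul]

theorem reflection_mul_self (h : C.IsRootDatum) {α : C.X} (hα : α ∈ C.roots) :
    C.reflection α * C.reflection α = 1 :=
  h.faithful_X _ fun x => by
    rw [mul_smul, h.reflection_smul hα, h.reflection_smul hα x, map_sub, map_zsmul,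
      h.coroot_self α hα]
    module

theorem reflection_conj (h : C.IsRootDatum) (w : C.W) {α : C.X} (hα : α ∈ C.roots) :
    w * C.reflection α * w⁻¹ = C.reflection (w • α) :=
  h.eq_reflection (h.roots_stable w α hα) fun x => by
    rw [mul_smul, mul_smul, h.reflection_smul hα, smul_sub, smul_inv_smul, smul_comm,
      ← h.smul_coroot w α hα, ← h.pair_inv_smul, inv_inv]

theorem coroot_neg (h : C.IsRootDatum) {α : C.X} (hα : α ∈ C.roots) :
    C.coroot (-α) = -C.coroot α := by
  obtain ⟨s, hsX, hsY⟩ := h.isReflection α hα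
  have hs : s • α = -α := by
    rw [hsX, h.coroot_self α hα, two_smul]
    abel
  rw [← hs, ← h.smul_coroot s α hα, hsY, h.coroot_self α hα, two_smul]
  abel

theorem reflection_neg (h : C.IsRootDatum) {α : C.X} (hα : α ∈ C.roots) :
    C.reflection (-α) = C.reflection α :=
  h.eq_reflection hα fun x => by
    rw [h.reflection_smul (h.neg_mem_roots hα), h.coroot_neg hα]
    simp

theorem pair_coroot_mul_form (h : C.IsRootDatum) {B : LinearMap.BilinForm ℤ C.X}
    (hB : IsInvariantPosDefForm C.W B) {α : C.X} (hα : α ∈ C.roots) (x : C.X) :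
    C.pair (C.coroot α) x * B α α = 2 * B x α := by
  have := hB.smul (C.reflection α) x α
  rw [h.reflection_smul_self hα, h.reflection_smul hα] at this
  simp only [map_sub, map_zsmul, map_neg, LinearMap.sub_apply, LinearMap.smul_apply,
    smul_eq_mul] at this
  linarith

theorem exists_isInvariantPosDefForm (h : C.IsRootDatum) :
    ∃ B : LinearMap.BilinForm ℤ C.X, IsInvariantPosDefForm C.W B :=
  have := h.free_X
  have := h.finite_X
  SemiInf.exists_isInvariantPosDefForm C.W C.X

theorem pair_coroot_pos_comm (h : C.IsRootDatum) {α β : C.X} (hα : α ∈ C.roots)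
    (hβ : β ∈ C.roots) (hαβ : 0 < C.pair (C.coroot α) β) : 0 < C.pair (C.coroot β) α := by
  obtain ⟨B, hB⟩ := h.exists_isInvariantPosDefForm
  have hα' := h.pair_coroot_mul_form hB hα β
  have hβ' := h.pair_coroot_mul_form hB hβ α
  have := hB.pos α (h.ne_zero_of_mem_roots hα)
  have := hB.pos β (h.ne_zero_of_mem_roots hβ)
  rw [hB.symm β α] at hα'
  nlinarith

theorem mem_pos_of_pair_pos (h : C.IsRootDatum) {η : C.Y} (hη : ∀ α ∈ C.pos, 0 < C.pair η α)
    {α : C.X} (hα : α ∈ C.roots) (hηα : 0 < C.pair η α) : α ∈ C.pos := by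
  by_contra hα'
  have := hη _ (h.neg_mem_pos hα hα')
  rw [map_neg] at this
  omega

theorem add_mem_pos (h : C.IsRootDatum) {α β : C.X} (hα : α ∈ C.pos) (hβ : β ∈ C.pos)
    (hαβ : α + β ∈ C.roots) : α + β ∈ C.pos := by
  obtain ⟨η, hη⟩ := h.exists_regular_Y
  exact h.mem_pos_of_pair_pos hη hαβ (by rw [map_add]; linarith [hη α hα, hη β hβ])

theorem sub_mem_pos_of_mem_simpleRoots (h : C.IsRootDatum) {δ γ : C.X}
    (hδ : δ ∈ C.simpleRoots) (hγ : γ ∈ C.pos) (hγδ : γ - δ ∈ C.roots) : γ - δ ∈ C.pos := by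
  by_contra hγδ'
  exact not_exists_add_of_mem_simpleRoots hδ
    ⟨γ, hγ, δ - γ, by simpa using h.neg_mem_pos hγδ hγδ', by abel⟩

theorem sub_notMem_roots_of_mem_simpleRoots (h : C.IsRootDatum) {δ ε : C.X}
    (hδ : δ ∈ C.simpleRoots) (hε : ε ∈ C.simpleRoots) : ε - δ ∉ C.roots := fun hεδ =>
  not_exists_add_of_mem_simpleRoots hε ⟨δ, mem_pos_of_mem_simpleRoots hδ, ε - δ,
    h.sub_mem_pos_of_mem_simpleRoots hδ (mem_pos_of_mem_simpleRoots hε) hεδ, by abel⟩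

theorem pair_coroot_simple_nonpos (h : C.IsRootDatum) {δ ε : C.X} (hδ : δ ∈ C.simpleRoots)
    (hε : ε ∈ C.simpleRoots) (hδε : δ ≠ ε) : C.pair (C.coroot δ) ε ≤ 0 := by
  have hδR := h.pos_subset (mem_pos_of_mem_simpleRoots hδ)
  have hεR := h.pos_subset (mem_pos_of_mem_simpleRoots hε)
  by_contra! hpos
  have hpos' := h.pair_coroot_pos_comm hδR hεR hpos
  -- a Cartan integer `1` would make `s_δ ε = ε - δ` (or `s_ε δ = δ - ε`) a root
  have hc : C.pair (C.coroot δ) ε ≠ 1 := fun h1 => h.sub_notMem_roots_of_mem_simpleRoots hδ hε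
    (by simpa [h.reflection_smul hδR, h1] using h.roots_stable (C.reflection δ) ε hεR)
  have hc' : C.pair (C.coroot ε) δ ≠ 1 := fun h1 => h.sub_notMem_roots_of_mem_simpleRoots hε hδ
    (by simpa [h.reflection_smul hεR, h1] using h.roots_stable (C.reflection ε) δ hδR)
  -- both Cartan integers are now at least 2, which forces `B (ε - δ) (ε - δ) ≤ 0`
  obtain ⟨B, hB⟩ := h.exists_isInvariantPosDefForm
  have hδε' := h.pair_coroot_mul_form hB hδR ε
  have hεδ' := h.pair_coroot_mul_form hB hεR δ
  have hδδ := hB.pos δ (h.ne_zero_of_mem_roots hδR)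
  have hεε := hB.pos ε (h.ne_zero_of_mem_roots hεR)
  have hsub := hB.pos (ε - δ) (sub_ne_zero.2 hδε.symm)
  simp only [map_sub, LinearMap.sub_apply] at hsub
  rw [hB.symm δ ε] at hsub hεδ'
  nlinarith [mul_nonneg (sub_nonneg.2 (show 2 ≤ C.pair (C.coroot δ) ε by omega)) hδδ.le,
    mul_nonneg (sub_nonneg.2 (show 2 ≤ C.pair (C.coroot ε) δ by omega)) hεε.le]

theorem reflection_smul_mem_pos_of_mem_simpleRoots (h : C.IsRootDatum) {δ : C.X}
    (hδ : δ ∈ C.simpleRoots) : ∀ β ∈ C.pos, β ≠ δ → C.reflection δ • β ∈ C.pos := by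
  obtain ⟨η, hη⟩ := h.exists_regular_Y
  have hδpos := mem_pos_of_mem_simpleRoots hδ
  have hδR := h.pos_subset hδpos
  -- induction on height; a summand `β₁ = δ` of `β = β₁ + β₂` turns `s_δ β` into
  -- `s_δ β₂ - δ`, which simplicity of `δ` keeps positive
  refine pos_induction_on_height η hη fun β hβ ih hβδ => ?_
  have hroot := h.smul_mem_roots (C.reflection δ) hβ
  by_cases hβs : β ∈ C.simpleRoots
  · refine h.mem_pos_of_pair_pos hη hroot ?_
    rw [h.reflection_smul hδR, map_sub, map_zsmul, smul_eq_mul]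
    nlinarith [h.pair_coroot_simple_nonpos hδ hβs hβδ.symm, hη β hβ, hη δ hδpos]
  obtain ⟨β₁, hβ₁, β₂, hβ₂, rfl⟩ := exists_add_of_notMem_simpleRoots hβ hβs
  have ih₁ := ih β₁ hβ₁ (by rw [map_add]; linarith [hη β₂ hβ₂])
  have ih₂ := ih β₂ hβ₂ (by rw [map_add]; linarith [hη β₁ hβ₁])
  rw [smul_add] at hroot ⊢
  by_cases h₁ : β₁ = δ <;> by_cases h₂ : β₂ = δ
  · rw [h₁, h₂, ← two_smul ℤ] at hβ
    have := h.reduced δ hδR 2 (h.pos_subset hβ)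
    omega
  · subst h₁
    rw [h.reflection_smul_self hδR, neg_add_eq_sub] at hroot ⊢
    exact h.sub_mem_pos_of_mem_simpleRoots hδ (ih₂ h₂) hroot
  · subst h₂
    rw [h.reflection_smul_self hδR, ← sub_eq_add_neg] at hroot ⊢
    exact h.sub_mem_pos_of_mem_simpleRoots hδ (ih₁ h₁) hroot
  · exact h.add_mem_pos (ih₁ h₁) (ih₂ h₂) hroot

theorem exists_mem_simpleRoots_pair_pos (h : C.IsRootDatum) (y : C.Y) :
    ∀ α ∈ C.pos, 0 < C.pair y α → ∃ δ ∈ C.simpleRoots, 0 < C.pair y δ := by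
  obtain ⟨η, hη⟩ := h.exists_regular_Y
  refine pos_induction_on_height η hη fun α hα ih hyα => ?_
  by_cases hαs : α ∈ C.simpleRoots
  · exact ⟨α, hαs, hyα⟩
  obtain ⟨β, hβ, γ, hγ, rfl⟩ := exists_add_of_notMem_simpleRoots hα hαs
  rw [map_add] at hyα
  rcases lt_or_ge 0 (C.pair y β) with hyβ | hyβ
  · exact ih β hβ (by rw [map_add]; linarith [hη γ hγ]) hyβ
  · exact ih γ hγ (by rw [map_add]; linarith [hη β hβ]) (by omega)

theorem reflection_mem_closure_simpleReflections (h : C.IsRootDatum) :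
    ∀ β ∈ C.pos, C.reflection β ∈ Subgroup.closure C.simpleReflections := by
  obtain ⟨η, hη⟩ := h.exists_regular_Y
  refine pos_induction_on_height η hη fun β hβ ih => ?_
  by_cases hβs : β ∈ C.simpleRoots
  · exact Subgroup.subset_closure ⟨β, hβs, rfl⟩
  have hβR := h.pos_subset hβ
  obtain ⟨δ, hδ, hβδ⟩ := h.exists_mem_simpleRoots_pair_pos (C.coroot β) β hβ
    (by rw [h.coroot_self β hβR]; norm_num)
  have hδR := h.pos_subset (mem_pos_of_mem_simpleRoots hδ)
  have hδβ := h.pair_coroot_pos_comm hβR hδR hβδ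
  -- `s_δ β` is a positive root of smaller height, and `s_β` is conjugate to its reflection
  have hβ' := h.reflection_smul_mem_pos_of_mem_simpleRoots hδ β hβ fun e => hβs (e ▸ hδ)
  have hlt : C.pair η (C.reflection δ • β) < C.pair η β := by
    rw [h.reflection_smul hδR, map_sub, map_zsmul, smul_eq_mul]
    nlinarith [hη δ (mem_pos_of_mem_simpleRoots hδ)]
  have hsδ : C.reflection δ ∈ Subgroup.closure C.simpleReflections :=
    Subgroup.subset_closure ⟨δ, hδ, rfl⟩
  have hconj : C.reflection β =
      (C.reflection δ)⁻¹ * C.reflection (C.reflection δ • β) * C.reflection δ := by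
    rw [← h.reflection_conj _ hβR]
    group
  rw [hconj]
  exact mul_mem (mul_mem (inv_mem hsδ) (ih _ hβ' hlt)) hsδ

theorem mem_closure_simpleReflections (h : C.IsRootDatum) (w : C.W) :
    w ∈ Subgroup.closure C.simpleReflections := by
  refine (Subgroup.closure_le _).mpr ?_ (h.weyl_gen w)
  rintro s ⟨α, hα, hsX, -⟩
  rw [h.eq_reflection hα hsX]
  by_cases hα' : α ∈ C.pos
  · exact h.reflection_mem_closure_simpleReflections α hα'
  · rw [← h.reflection_neg hα]
    exact h.reflection_mem_closure_simpleReflections _ (h.neg_mem_pos hα hα')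

theorem exists_sublist_prod_eq_mul_reflection (h : C.IsRootDatum) {δ : C.X}
    (hδ : δ ∈ C.simpleRoots) :
    ∀ L : List C.W, (∀ g ∈ L, g ∈ C.simpleReflections) → L.prod • δ ∉ C.pos →
      ∃ L' : List C.W, L'.Sublist L ∧ L'.length + 1 = L.length ∧
        L'.prod = L.prod * C.reflection δ
  | [], _, hLδ => (hLδ (by simpa using mem_pos_of_mem_simpleRoots hδ)).elim
  | g :: L, hgL, hgLδ => by
    obtain ⟨ε, hε, rfl⟩ := hgL g List.mem_cons_self
    have hL : ∀ g ∈ L, g ∈ C.simpleReflections := fun g hg => hgL g (List.mem_cons_of_mem _ hg)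
    by_cases hLδ : L.prod • δ ∈ C.pos
    · -- `s_ε` only negates `ε` among the positive roots, so `L.prod • δ = ε`
      have hε' : L.prod • δ = ε := by
        by_contra hne
        refine hgLδ ?_
        rw [List.prod_cons, mul_smul]
        exact h.reflection_smul_mem_pos_of_mem_simpleRoots hε _ hLδ hne
      have hconj := h.reflection_conj L.prod (h.pos_subset (mem_pos_of_mem_simpleRoots hδ))
      rw [hε'] at hconj
      refine ⟨L, List.sublist_cons_self _ _, rfl, ?_⟩
      rw [List.prod_cons, ← hconj, inv_mul_cancel_right, mul_assoc,
        h.reflection_mul_self (h.pos_subset (mem_pos_of_mem_simpleRoots hδ)), mul_one]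
    · obtain ⟨L', hsub, hlen, hprod⟩ := h.exists_sublist_prod_eq_mul_reflection hδ L hL hLδ
      exact ⟨C.reflection ε :: L', hsub.cons_cons _, by simp [hlen],
        by rw [List.prod_cons, List.prod_cons, hprod, mul_assoc]⟩

theorem prod_eq_one_of_forall_smul_mem_pos (h : C.IsRootDatum) (L : List C.W)
    (hL : ∀ g ∈ L, g ∈ C.simpleReflections) (hpos : ∀ α ∈ C.pos, L.prod • α ∈ C.pos) :
    L.prod = 1 := by
  rcases L.eq_nil_or_concat' with rfl | ⟨L₀, g, rfl⟩
  · rfl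
  obtain ⟨δ, hδ, rfl⟩ := hL g (by simp)
  have hδR := h.pos_subset (mem_pos_of_mem_simpleRoots hδ)
  have hprod : (L₀ ++ [C.reflection δ]).prod = L₀.prod * C.reflection δ := by simp
  have hL₀δ : L₀.prod • δ ∉ C.pos := fun hL₀δ => h.pos_neg_disjoint _ hL₀δ <| by
    simpa [hprod, mul_smul, h.reflection_smul_self hδR] using
      hpos δ (mem_pos_of_mem_simpleRoots hδ)
  obtain ⟨L', hsub, hlen, hL'⟩ := h.exists_sublist_prod_eq_mul_reflection hδ L₀
    (fun g hg => hL g (List.mem_append_left _ hg)) hL₀δ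
  rw [hprod, ← hL']
  exact h.prod_eq_one_of_forall_smul_mem_pos L'
    (fun g hg => hL g (List.mem_append_left _ (hsub.subset hg))) (by rwa [hL', ← hprod])
termination_by L.length
decreasing_by subst_vars; simp; omega

theorem eq_one_of_forall_smul_mem_pos (h : C.IsRootDatum) {w : C.W}
    (hw : ∀ α ∈ C.pos, w • α ∈ C.pos) : w = 1 := by
  have hw' : w ∈ Submonoid.closure C.simpleReflections := by
    rw [← Subgroup.closure_toSubmonoid_of_finite]
    exact h.mem_closure_simpleReflections w
  obtain ⟨L, hL, rfl⟩ := Submonoid.exists_list_of_mem_closure hw'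
  exact h.prod_eq_one_of_forall_smul_mem_pos L hL hw

theorem eq_of_isLongest (h : C.IsRootDatum) {u w₀ : C.W} (hu : C.IsLongest u)
    (hw₀ : C.IsLongest w₀) : u = w₀ := by
  have hw₀neg : ∀ β ∈ C.pos, w₀⁻¹ • -β ∈ C.pos := fun β hβ => by
    have hβ' : w₀⁻¹ • β ∉ C.pos := fun hβ' =>
      h.pos_neg_disjoint β hβ (by simpa using hw₀ _ hβ')
    simpa using h.neg_mem_pos (h.smul_mem_roots _ hβ) hβ'
  refine (inv_mul_eq_one.mp (h.eq_one_of_forall_smul_mem_pos fun α hα => ?_)).symm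
  simpa [mul_smul] using hw₀neg _ (hu α hα)

theorem eq_one_of_lenW_eq_zero (h : C.IsRootDatum) {u : C.W} (hu : C.lenW u = 0) : u = 1 :=
  h.eq_one_of_forall_smul_mem_pos fun α hα => by
    have huα := Finset.filter_eq_empty_iff.mp (Finset.card_eq_zero.mp hu) hα
    exact (h.root_decomp _ (h.smul_mem_roots u hα)).resolve_right huα

theorem lenW_one (h : C.IsRootDatum) : C.lenW 1 = 0 :=
  Finset.card_eq_zero.mpr <| Finset.filter_eq_empty_iff.mpr fun α hα => by
    simpa using h.pos_neg_disjoint α hα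

theorem sum_pos_smul_eq_sum_pos (h : C.IsRootDatum) (u : C.W) {M : Type*} [AddCommMonoid M]
    {f : C.X → M} (hf : ∀ x, f (-x) = f x) :
    ∑ α ∈ C.pos, f (u • α) = ∑ β ∈ C.pos, f β := by
  let rep (x : C.X) : C.X := if x ∈ C.pos then x else -x
  have rep_mem {x : C.X} (hx : x ∈ C.roots) : rep x ∈ C.pos := by
    by_cases hx' : x ∈ C.pos <;> simp [rep, hx', h.neg_mem_pos hx]
  have rep_inv_smul_rep (v : C.W) {α : C.X} (hα : α ∈ C.pos) : rep (v⁻¹ • rep (v • α)) = α := by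
    by_cases hv : v • α ∈ C.pos <;> simp [rep, hv, hα, h.pos_neg_disjoint α hα]
  refine Finset.sum_nbij' (fun α => rep (u • α)) (fun β => rep (u⁻¹ • β))
    (fun α hα => rep_mem (h.smul_mem_roots u hα)) (fun β hβ => rep_mem (h.smul_mem_roots _ hβ))
    (fun α hα => rep_inv_smul_rep u hα) (fun β hβ => by simpa using rep_inv_smul_rep u⁻¹ hβ)
    fun α _ => ?_
  by_cases hu : u • α ∈ C.pos <;> simp [rep, hu, hf]

theorem len_t_mul_σ (h : C.IsRootDatum) (l : C.Y) (u : C.W) :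
    C.len (C.t l * C.σ u) = ∑ α ∈ C.pos,
      if u • α ∈ C.pos then (C.pair l (u • α)).natAbs
      else (1 - C.pair l (u • α)).natAbs := by
  simp [len, t, σ, h.pair_inv_smul]

theorem len_t_mul_σ_of_mem_Ypos (h : C.IsRootDatum) {l : C.Y} (hl : l ∈ C.Ypos) (u : C.W) :
    C.len (C.t l * C.σ u) = ∑ β ∈ C.pos, (C.pair l β).natAbs + C.lenW u := by
  rw [h.len_t_mul_σ, lenW, Finset.card_filter,
    ← h.sum_pos_smul_eq_sum_pos u (f := fun x => (C.pair l x).natAbs) (by simp),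
    ← Finset.sum_add_distrib]
  refine Finset.sum_congr rfl fun α hα => ?_
  by_cases hu : u • α ∈ C.pos
  · simp [hu, h.pos_neg_disjoint _ hu]
  · have hu' := h.neg_mem_pos (h.smul_mem_roots u hα) hu
    have hlα := hl _ hu'
    simp only [map_neg] at hlα
    simp only [hu, hu', if_false, if_true]
    omega

theorem len_t_mul_σ_add_lenW_of_neg_mem_Yppos (h : C.IsRootDatum) {l : C.Y}
    (hl : -l ∈ C.Yppos) (u : C.W) :
    C.len (C.t l * C.σ u) + C.lenW u = ∑ β ∈ C.pos, (C.pair l β).natAbs := by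
  rw [h.len_t_mul_σ, lenW, Finset.card_filter,
    ← h.sum_pos_smul_eq_sum_pos u (f := fun x => (C.pair l x).natAbs) (by simp),
    ← Finset.sum_add_distrib]
  refine Finset.sum_congr rfl fun α hα => ?_
  by_cases hu : u • α ∈ C.pos
  · simp [hu, h.pos_neg_disjoint _ hu]
  · have hu' := h.neg_mem_pos (h.smul_mem_roots u hα) hu
    have hlα := hl _ hu'
    simp only [map_neg, AddMonoidHom.neg_apply, neg_neg] at hlα
    simp only [hu, hu', if_false, if_true]
    omega

end IsRootDatum

theorem lenW_le_card (C : Ctx) (u : C.W) : C.lenW u ≤ C.pos.card :=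
  Finset.card_filter_le _ _

theorem isLongest_iff_lenW_eq_card (C : Ctx) (u : C.W) :
    C.IsLongest u ↔ C.lenW u = C.pos.card :=
  Finset.card_filter_eq_iff.symm

theorem t_mul_σ_one (C : Ctx) (l : C.Y) : C.t l * C.σ 1 = C.t l := by
  simp [σ]

end Ctx

end SemiInf

/-- If `λ ∈ Y₊` then `t_λ` is the unique element of minimal length in the coset
`t_λ W_f`; if `λ ∈ −Y₊₊` then `t_λ w∘` is the unique element of minimal length
in the coset `t_λ W_f`, where `w∘` is the longest element of `W_f`. -/
theorem statement5 (C : SemiInf.Ctx) (h : C.IsRootDatum) (l : C.Y) :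
    (l ∈ C.Ypos →
      (∀ u : C.W, C.len (C.t l) ≤ C.len (C.t l * C.σ u)) ∧
      (∀ u : C.W,
        (∀ u' : C.W, C.len (C.t l * C.σ u) ≤ C.len (C.t l * C.σ u')) →
        C.t l * C.σ u = C.t l)) ∧
    (-l ∈ C.Yppos → ∀ w₀ : C.W, C.IsLongest w₀ →
      (∀ u : C.W, C.len (C.t l * C.σ w₀) ≤ C.len (C.t l * C.σ u)) ∧
      (∀ u : C.W,
        (∀ u' : C.W, C.len (C.t l * C.σ u) ≤ C.len (C.t l * C.σ u')) →
        C.t l * C.σ u = C.t l * C.σ w₀)) := by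
  refine ⟨fun hl => ?_, fun hl w₀ hw₀ => ?_⟩
  · have hlen := h.len_t_mul_σ_of_mem_Ypos hl
    have hlen₁ := hlen 1
    rw [C.t_mul_σ_one, h.lenW_one] at hlen₁
    refine ⟨fun u => by rw [hlen₁, hlen u]; omega, fun u hu => ?_⟩
    have hu₁ := hu 1
    rw [hlen, hlen, h.lenW_one] at hu₁
    rw [h.eq_one_of_lenW_eq_zero (u := u) (by omega), C.t_mul_σ_one]
  · have hlen := h.len_t_mul_σ_add_lenW_of_neg_mem_Yppos hl
    have hw₀' := (C.isLongest_iff_lenW_eq_card w₀).mp hw₀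
    refine ⟨fun u => ?_, fun u hu => ?_⟩
    · linarith [hlen u, hlen w₀, C.lenW_le_card u]
    · have hu' : C.IsLongest u := (C.isLongest_iff_lenW_eq_card u).mpr <| by
        linarith [hu w₀, hlen u, hlen w₀, C.lenW_le_card u]
      rw [h.eq_of_isLongest hu' hw₀]
end
end

section
/- For every λ ∈ Y₊ and every w_f ∈ W_f, the element t_λ w_f belongs to W_ext⁺, i.e. ℓ(t_μ t_λ w_f) = ℓ(t_μ) + ℓ(t_λ w_f) for every μ ∈ Y₊. -/
open scoped Classical TensorProduct

noncomputable section

/-- For every `λ ∈ Y₊` and `w_f ∈ W_f` the element `t_λ w_f` belongs to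
`W_ext⁺`, i.e. `ℓ(t_μ t_λ w_f) = ℓ(t_μ) + ℓ(t_λ w_f)` for every `μ ∈ Y₊`. -/
theorem statement6 (C : SemiInf.Ctx) (h : C.IsRootDatum)
    (l : C.Y) (hl : l ∈ C.Ypos) (w : C.W) :
    C.t l * C.σ w ∈ C.WextPlus := by
  intro μ hμ
  have hpair : ∀ (u : C.W) (y : C.Y) (x : C.X), C.pair (u⁻¹ • y) x = C.pair y (u • x) := by
    intro u y x
    have := h.pair_inv u (u⁻¹ • y) x
    rw [smul_inv_smul] at this
    exact this.symm
  have hR : (C.t μ * (C.t l * C.σ w)).right = w := by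
    simp [SemiInf.Ctx.t, SemiInf.Ctx.σ, SemidirectProduct.mul_right]
  have hL : Multiplicative.toAdd (C.t μ * (C.t l * C.σ w)).left = μ + l := by
    simp [SemiInf.Ctx.t, SemiInf.Ctx.σ, SemidirectProduct.mul_left, map_one, MulAut.one_apply]
  have hR2 : (C.t l * C.σ w).right = w := by
    simp [SemiInf.Ctx.t, SemiInf.Ctx.σ, SemidirectProduct.mul_right]
  have hL2 : Multiplicative.toAdd (C.t l * C.σ w).left = l := by
    simp [SemiInf.Ctx.t, SemiInf.Ctx.σ, SemidirectProduct.mul_left, map_one, MulAut.one_apply]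
  have hRt : (C.t μ).right = 1 := rfl
  have hLt : Multiplicative.toAdd (C.t μ).left = μ := rfl
  unfold SemiInf.Ctx.len
  rw [hR, hL, hR2, hL2, hRt, hLt]
  simp only [inv_one, one_smul]
  -- now sums
  rw [Finset.sum_congr rfl (fun α hα => if_pos hα)]
  have step1 : ∀ α ∈ C.pos,
      (if w • α ∈ C.pos then (C.pair (w⁻¹ • (μ + l)) α).natAbs
        else ((1:ℤ) - C.pair (w⁻¹ • (μ + l)) α).natAbs)
      = (C.pair μ (w • α)).natAbs +
        (if w • α ∈ C.pos then (C.pair (w⁻¹ • l) α).natAbs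
          else ((1:ℤ) - C.pair (w⁻¹ • l) α).natAbs) := by
    intro α hα
    have hroot : w • α ∈ C.roots := h.roots_stable w α (h.pos_subset hα)
    rw [hpair, hpair]
    have hadd : C.pair (μ + l) (w • α) = C.pair μ (w • α) + C.pair l (w • α) := by
      simp [map_add]
    by_cases hc : w • α ∈ C.pos
    · rw [if_pos hc, if_pos hc]
      have h1 := hμ _ hc
      have h2 := hl _ hc
      omega
    · rw [if_neg hc, if_neg hc]
      have hneg : -(w • α) ∈ C.pos := (h.root_decomp _ hroot).resolve_left hc
      have h1 : C.pair μ (w • α) ≤ 0 := by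
        have := hμ _ hneg; simp only [map_neg] at this; omega
      have h2 : C.pair l (w • α) ≤ 0 := by
        have := hl _ hneg; simp only [map_neg] at this; omega
      omega
  rw [Finset.sum_congr rfl step1, Finset.sum_add_distrib]
  congr 1
  -- reindexing: ∑_{α∈pos} |⟨μ, wα⟩| = ∑_{α∈pos} |⟨μ, α⟩|
  refine Finset.sum_nbij' (fun α => if w • α ∈ C.pos then w • α else -(w • α))
    (fun α => if w⁻¹ • α ∈ C.pos then w⁻¹ • α else -(w⁻¹ • α)) ?_ ?_ ?_ ?_ ?_
  · intro α hα
    by_cases hc : w • α ∈ C.pos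
    · simpa [hc] using hc
    · have hroot : w • α ∈ C.roots := h.roots_stable w α (h.pos_subset hα)
      simpa [hc] using (h.root_decomp _ hroot).resolve_left hc
  · intro α hα
    by_cases hc : w⁻¹ • α ∈ C.pos
    · simpa [hc] using hc
    · have hroot : w⁻¹ • α ∈ C.roots := h.roots_stable w⁻¹ α (h.pos_subset hα)
      simpa [hc] using (h.root_decomp _ hroot).resolve_left hc
  · intro α hα
    by_cases hc : w • α ∈ C.pos
    · simp [hc, inv_smul_smul, hα]
    · have h2 : ¬ (w⁻¹ • -(w • α) ∈ C.pos) := by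
        rw [smul_neg, inv_smul_smul]
        exact fun hn => h.pos_neg_disjoint α hα hn
      simp [hc, h2, smul_neg, inv_smul_smul, h.pos_neg_disjoint α hα]
  · intro α hα
    by_cases hc : w⁻¹ • α ∈ C.pos
    · simp [hc, smul_inv_smul, hα]
    · have h2 : ¬ (w • -(w⁻¹ • α) ∈ C.pos) := by
        rw [smul_neg, smul_inv_smul]
        exact fun hn => h.pos_neg_disjoint α hα hn
      simp [hc, h2, smul_neg, smul_inv_smul, h.pos_neg_disjoint α hα]
  · intro α hα
    by_cases hc : w • α ∈ C.pos
    · simp [hc]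
    · simp [hc, map_neg]
end
end

section
/- Every w ∈ W_ext admits a factorization w = u · (t_λ x) with u, x ∈ W_f and λ ∈ Y₊ such that ℓ(w) = ℓ(t_λ x) − ℓ(u); equivalently, the element of maximal length in the coset W_f w is of the form t_λ x with λ ∈ Y₊ and x ∈ W_f. -/
open scoped Classical TensorProduct

noncomputable section

section Aux

open SemiInf Multiplicative

variable {C : SemiInf.Ctx}

lemma aux_phiext (w : C.W) (m : Multiplicative C.Y) :
    C.φext w m = Multiplicative.ofAdd (w • Multiplicative.toAdd m) := rfl

lemma aux_neg_mem (h : C.IsRootDatum) {g : C.X} (hg : g ∈ C.roots) (hn : g ∉ C.pos) :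
    -g ∈ C.pos := (h.root_decomp g hg).resolve_left hn

lemma aux_pair_smul (h : C.IsRootDatum) (x : C.W) (y : C.Y) (a : C.X) :
    C.pair (x • y) a = C.pair y (x⁻¹ • a) := by
  rw [← h.pair_inv x⁻¹ (x • y) a, inv_smul_smul]

lemma aux_pair_expand (y : C.Y) (k : ℤ) (c : C.Y) (a : C.X) :
    C.pair (y - k • c) a = C.pair y a - k * C.pair c a := by
  simp [map_sub, map_zsmul]

lemma aux_pair_expand' (k : ℤ) (y : C.Y) (c : C.Y) (a : C.X) :
    C.pair (k • y - c) a = k * C.pair y a - C.pair c a := by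
  simp [map_sub, map_zsmul]

lemma aux_dom (h : C.IsRootDatum) (m : C.Y) (hreg : ∀ g ∈ C.roots, C.pair m g ≠ 0) :
    ∃ x : C.W, ∀ b ∈ C.pos, 0 < C.pair (x • m) b := by
  obtain ⟨xi, hxi⟩ := h.exists_regular_X
  obtain ⟨x, -, hx⟩ := Finset.exists_max_image (Finset.univ : Finset C.W)
    (fun v => C.pair (v • m) xi) ⟨1, Finset.mem_univ 1⟩
  refine ⟨x, fun b hb => ?_⟩
  have hbr := h.pos_subset hb
  have hne : C.pair (x • m) b ≠ 0 := by
    rw [aux_pair_smul h]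
    exact hreg _ (h.roots_stable x⁻¹ b hbr)
  by_contra hcon
  have hneg : C.pair (x • m) b < 0 := lt_of_le_of_ne (not_lt.mp hcon) hne
  obtain ⟨s, hsX, hsY⟩ := h.isReflection b hbr
  have hmax := hx (s * x) (Finset.mem_univ _)
  rw [mul_smul, hsY (x • m), aux_pair_expand] at hmax
  have := mul_neg_of_neg_of_pos hneg (hxi b hb)
  linarith

end Aux

/-- Every `w ∈ W_ext` factors as `w = u · (t_λ x)` with `u, x ∈ W_f` and
`λ ∈ Y₊`, with `ℓ(w) = ℓ(t_λ x) − ℓ(u)`; equivalently, the element of maximal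
length in the coset `W_f w` has the form `t_λ x` with `λ ∈ Y₊`, `x ∈ W_f`. -/
theorem statement11 (C : SemiInf.Ctx) (h : C.IsRootDatum) (g : C.Wext) :
    ∃ (u x : C.W) (l : C.Y), l ∈ C.Ypos ∧
      g = C.σ u * (C.t l * C.σ x) ∧
      (C.len g : ℤ) = (C.len (C.t l * C.σ x) : ℤ) - (C.lenW u : ℤ) ∧
      ∀ v : C.W, C.len (C.σ v * g) ≤ C.len (C.t l * C.σ x) := by

  classical
  set w : C.W := g.right with hw
  set nu : C.Y := Multiplicative.toAdd g.left with hnu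
  set lam : C.Y := w⁻¹ • nu with hlam
  obtain ⟨eta, heta⟩ := h.exists_regular_Y
  set M : ℕ := C.roots.sup fun g' => (C.pair eta g').natAbs with hM
  have hMb : ∀ g' ∈ C.roots, (C.pair eta g').natAbs ≤ M := fun g' hg' => by rw [hM]; exact Finset.le_sup (f := fun g' => (C.pair eta g').natAbs) hg'
  set m : C.Y := ((M : ℤ) + 1) • lam - eta with hm
  have hmval : ∀ g' : C.X, C.pair m g' = ((M:ℤ)+1) * C.pair lam g' - C.pair eta g' := by
    intro g'; rw [hm, aux_pair_expand']
  have heta_ne : ∀ g' ∈ C.roots, C.pair eta g' ≠ 0 := by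
    intro g' hg'
    rcases h.root_decomp g' hg' with hp | hp
    · exact (heta g' hp).ne'
    · have := heta _ hp; simp only [map_neg] at this; omega
  have hsign : ∀ g' ∈ C.roots, (0 < C.pair lam g' → 0 < C.pair m g')
      ∧ (C.pair lam g' < 0 → C.pair m g' < 0) := by
    intro g' hg'
    have hb := hMb g' hg'
    have he1 : C.pair eta g' ≤ (M:ℤ) := by omega
    have he2 : -(M:ℤ) ≤ C.pair eta g' := by omega
    constructor <;> intro hl <;> rw [hmval] <;> nlinarith
  have hregm : ∀ g' ∈ C.roots, C.pair m g' ≠ 0 := by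
    intro g' hg'
    rcases lt_trichotomy (C.pair lam g') 0 with hl|hl|hl
    · exact ((hsign g' hg').2 hl).ne
    · rw [hmval, hl]; have := heta_ne g' hg'; omega
    · exact ((hsign g' hg').1 hl).ne'
  obtain ⟨x, hx⟩ := aux_dom h m hregm
  -- x • g' positive iff pairing with m positive, for any root g'
  have hmain1 : ∀ g' ∈ C.roots, (0 < C.pair m g' ↔ x • g' ∈ C.pos) := by
    intro g' hg'
    have hxr : x • g' ∈ C.roots := h.roots_stable x g' hg'
    constructor
    · intro hp
      by_contra hn
      have hneg : -(x • g') ∈ C.pos := aux_neg_mem h hxr hn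
      have := hx _ hneg
      rw [map_neg] at this
      rw [← h.pair_inv x m g'] at hp
      omega
    · intro hp
      have := hx _ hp
      rwa [h.pair_inv x m g'] at this
  -- for positive roots, pairing with m positive iff pairing with lam positive
  have hml : ∀ a ∈ C.pos, (0 < C.pair m a ↔ 0 < C.pair lam a) := by
    intro a ha
    have har := h.pos_subset ha
    constructor
    · intro hp
      by_contra hn
      rcases lt_or_eq_of_le (not_lt.mp hn) with hl | hl
      · exact absurd hp (not_lt.mpr ((hsign a har).2 hl).le)
      · rw [hmval, ← hl] at hp
        have := heta a ha
        nlinarith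
    · exact (hsign a har).1
  have hkey : ∀ a ∈ C.pos, (x • a ∈ C.pos ↔ 0 < C.pair lam a) := by
    intro a ha
    rw [← hmain1 a (h.pos_subset ha), hml a ha]
  refine ⟨w * x⁻¹, x, x • lam, ?_, ?_, ?_, ?_⟩
  · -- dominance
    intro b hb
    have hbr := h.pos_subset hb
    rw [aux_pair_smul h]
    have hroot : x⁻¹ • b ∈ C.roots := h.roots_stable x⁻¹ b hbr
    have hmpos : 0 < C.pair m (x⁻¹ • b) := by
      have := hx b hb
      rwa [aux_pair_smul h] at this
    by_contra hn
    have : C.pair lam (x⁻¹ • b) < 0 := not_le.mp hn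
    exact absurd hmpos (not_lt.mpr ((hsign _ hroot).2 this).le)
  · -- factorization
    have hleft : (C.σ (w * x⁻¹) * (C.t (x • lam) * C.σ x)).left = g.left := by
      simp only [SemiInf.Ctx.σ, SemiInf.Ctx.t, SemidirectProduct.mul_left,
        SemidirectProduct.left_inl, SemidirectProduct.left_inr,
        SemidirectProduct.right_inl, SemidirectProduct.right_inr, map_one, mul_one,
        one_mul, aux_phiext, toAdd_ofAdd]
      rw [mul_smul, inv_smul_smul, hlam, smul_inv_smul]
      rfl
    have hright : (C.σ (w * x⁻¹) * (C.t (x • lam) * C.σ x)).right = g.right := by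
      simp only [SemiInf.Ctx.σ, SemiInf.Ctx.t, SemidirectProduct.mul_right,
        SemidirectProduct.right_inl, SemidirectProduct.right_inr, one_mul, mul_one]
      rw [mul_assoc, inv_mul_cancel, mul_one, hw]
    exact SemidirectProduct.ext hleft.symm hright.symm
  all_goals
    have hcompr : (C.t (x • lam) * C.σ x).right = x := by
      simp [SemiInf.Ctx.σ, SemiInf.Ctx.t, SemidirectProduct.mul_right]
    have hcompl : Multiplicative.toAdd (C.t (x • lam) * C.σ x).left = x • lam := by
      simp [SemiInf.Ctx.σ, SemiInf.Ctx.t, SemidirectProduct.mul_left, aux_phiext]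
    have hlenh : C.len (C.t (x • lam) * C.σ x)
        = ∑ a ∈ C.pos, if x • a ∈ C.pos then (C.pair lam a).natAbs
            else ((1:ℤ) - C.pair lam a).natAbs := by
      rw [SemiInf.Ctx.len, hcompr]
      refine Finset.sum_congr rfl fun a ha => ?_
      rw [hcompl, inv_smul_smul]
    have hleng : C.len g
        = ∑ a ∈ C.pos, if w • a ∈ C.pos then (C.pair lam a).natAbs
            else ((1:ℤ) - C.pair lam a).natAbs := rfl
  · -- length identity
    have hA : C.len (C.t (x • lam) * C.σ x) = C.len g
        + (C.pos.filter fun a => ¬((x • a ∈ C.pos) ↔ (w • a ∈ C.pos))).card := by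
      rw [hlenh, hleng, Finset.card_filter, ← Finset.sum_add_distrib]
      refine Finset.sum_congr rfl fun a ha => ?_
      have hk := hkey a ha
      by_cases h1 : x • a ∈ C.pos <;> by_cases h2 : w • a ∈ C.pos
      · rw [if_pos h1, if_pos h2, if_neg (not_not_intro (iff_of_true h1 h2))]
        omega
      · have hkpos : 0 < C.pair lam a := hk.mp h1
        rw [if_pos h1, if_neg h2, if_pos (fun hiff => h2 (hiff.mp h1))]
        omega
      · have hknp : ¬ 0 < C.pair lam a := fun hc => h1 (hk.mpr hc)
        rw [if_neg h1, if_pos h2, if_pos (fun hiff => h1 (hiff.mpr h2))]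
        omega
      · rw [if_neg h1, if_neg h2, if_neg (not_not_intro (iff_of_false h1 h2))]
        omega
    have hB : C.lenW (w * x⁻¹)
        = (C.pos.filter fun b => -((w * x⁻¹) • b) ∈ C.pos).card := rfl
    have hneg_of : ∀ a ∈ C.pos, -a ∉ C.pos := h.pos_neg_disjoint
    have hcard : (C.pos.filter fun a => ¬((x • a ∈ C.pos) ↔ (w • a ∈ C.pos))).card
        = (C.pos.filter fun b => -((w * x⁻¹) • b) ∈ C.pos).card := by
      refine Finset.card_bij'
        (fun a _ => if x • a ∈ C.pos then x • a else -(x • a))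
        (fun b _ => if x⁻¹ • b ∈ C.pos then x⁻¹ • b else -(x⁻¹ • b))
        ?_ ?_ ?_ ?_
      · intro a ha
        rw [Finset.mem_filter] at ha ⊢
        obtain ⟨hap, hiff⟩ := ha
        have har := h.pos_subset hap
        have hu : (w * x⁻¹) • (x • a) = w • a := by
          rw [mul_smul, inv_smul_smul]
        by_cases hxa : x • a ∈ C.pos
        · have hwa : w • a ∉ C.pos := fun hc => hiff (iff_of_true hxa hc)
          rw [if_pos hxa]
          exact ⟨hxa, by rw [hu]; exact aux_neg_mem h (h.roots_stable w a har) hwa⟩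
        · have hwa : w • a ∈ C.pos := by
            by_contra hc; exact hiff (iff_of_false hxa hc)
          rw [if_neg hxa]
          refine ⟨aux_neg_mem h (h.roots_stable x a har) hxa, ?_⟩
          rw [smul_neg, hu, neg_neg]
          exact hwa
      · intro b hb
        rw [Finset.mem_filter] at hb ⊢
        obtain ⟨hbp, hub⟩ := hb
        have hbr := h.pos_subset hbp
        have hwb : w • (x⁻¹ • b) = (w * x⁻¹) • b := by rw [mul_smul]
        have hub' : (w * x⁻¹) • b ∉ C.pos := fun hc => hneg_of _ hc hub
        by_cases hxb : x⁻¹ • b ∈ C.pos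
        · rw [if_pos hxb]
          refine ⟨hxb, fun hiff => ?_⟩
          rw [smul_inv_smul, hwb] at hiff
          exact hub' (hiff.mp hbp)
        · rw [if_neg hxb]
          refine ⟨aux_neg_mem h (h.roots_stable x⁻¹ b hbr) hxb, fun hiff => ?_⟩
          rw [smul_neg, smul_inv_smul, smul_neg, hwb] at hiff
          exact hneg_of b hbp (hiff.mpr hub)
      · intro a ha
        rw [Finset.mem_filter] at ha
        by_cases hxa : x • a ∈ C.pos
        · rw [if_pos hxa, if_pos (show x⁻¹ • x • a ∈ C.pos by rw [inv_smul_smul]; exact ha.1), inv_smul_smul]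
        · rw [if_neg hxa, smul_neg, inv_smul_smul,
            if_neg (fun hc => hneg_of a ha.1 hc), neg_neg]
      · intro b hb
        rw [Finset.mem_filter] at hb
        by_cases hxb : x⁻¹ • b ∈ C.pos
        · rw [if_pos hxb, if_pos (show x • x⁻¹ • b ∈ C.pos by rw [smul_inv_smul]; exact hb.1), smul_inv_smul]
        · rw [if_neg hxb, smul_neg, smul_inv_smul,
            if_neg (fun hc => hneg_of b hb.1 hc), neg_neg]
    rw [hA, hB, hcard]
    push_cast
    ring
  · -- maximality
    intro v
    have hcr : (C.σ v * g).right = v * w := by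
      simp [SemiInf.Ctx.σ, SemidirectProduct.mul_right, hw]
    have hcl : Multiplicative.toAdd (C.σ v * g).left = v • nu := by
      simp [SemiInf.Ctx.σ, SemidirectProduct.mul_left, aux_phiext, hnu]
    have hlenv : C.len (C.σ v * g)
        = ∑ a ∈ C.pos, if (v * w) • a ∈ C.pos then (C.pair lam a).natAbs
            else ((1:ℤ) - C.pair lam a).natAbs := by
      have hlamval : (v * w)⁻¹ • Multiplicative.toAdd (C.σ v * g).left = lam := by
        rw [hcl, hlam, mul_inv_rev, mul_smul, inv_smul_smul]
      rw [SemiInf.Ctx.len, hcr]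
      refine Finset.sum_congr rfl fun a ha => ?_
      rw [hlamval]
    rw [hlenv, hlenh]
    refine Finset.sum_le_sum fun a ha => ?_
    have hk := hkey a ha
    by_cases h1 : x • a ∈ C.pos
    · have hkpos : 0 < C.pair lam a := hk.mp h1
      rw [if_pos h1]
      split_ifs <;> omega
    · have hknp : ¬ 0 < C.pair lam a := fun hc => h1 (hk.mpr hc)
      rw [if_neg h1]
      split_ifs <;> omega
end
end

section
/- For every η ∈ Y there exists N ∈ ℤ≥0 such that for every μ ∈ Y satisfying ⟨μ,α⟩ ≥ N for all simple roots α, and for every w ∈ W_f with w ≠ 1, the element w(μ+ρ∨) − (μ+η+ρ∨) of ℚ⊗Y is not a ℤ≥0-linear combination of positive coroots. -/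
open scoped Classical TensorProduct

noncomputable section

/-!
Fix `ξ ∈ X` with `⟨α∨, ξ⟩ > 0` for every positive root `α`. The functional `⟨-, ξ⟩` is
nonnegative on the cone of positive coroots, while on `w(μ + ρ∨) - (μ + η + ρ∨)` it takes the value
`-⟨μ + ρ∨, ξ - w⁻¹ξ⟩ - ⟨η, ξ⟩`. For `w ≠ 1` the element `ξ - w⁻¹ξ` is a nonzero sum of positive
roots, each of which pairs to at least `N` with `μ`; so the value is negative as soon as `N` exceeds
a bound depending only on `η` and `ξ`.

That `ξ - wξ` is a nonzero sum of positive roots follows by induction on the length of a word for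
`w` in the simple reflections, using the exchange condition. The root-system facts behind it
(a simple reflection permutes the other positive roots, and the simple reflections generate `W`)
are derived from a `W`-invariant positive definite form on `X`.
-/

section InvariantForm

open LinearMap.BilinForm Module

variable (G M : Type*) [Group G] [Fintype G] [AddCommGroup M] [DistribMulAction G M]
  [Free ℤ M] [Module.Finite ℤ M]

def invariantForm : LinearMap.BilinForm ℤ M :=
  ∑ g : G, ∑ i, linMulLin ((Free.chooseBasis ℤ M).coord i ∘ₗ DistribSMul.toLinearMap ℤ M g)
    ((Free.chooseBasis ℤ M).coord i ∘ₗ DistribSMul.toLinearMap ℤ M g)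

variable {G M}

lemma invariantForm_apply (x y : M) :
    invariantForm G M x y = ∑ g : G, ∑ i,
      (Free.chooseBasis ℤ M).repr (g • x) i * (Free.chooseBasis ℤ M).repr (g • y) i := by
  simp [invariantForm]

lemma invariantForm_smul (g : G) (x y : M) :
    invariantForm G M (g • x) (g • y) = invariantForm G M x y := by
  simp only [invariantForm_apply, ← mul_smul]
  exact Fintype.sum_equiv (Equiv.mulRight g) _ _ fun _ => rfl

lemma invariantForm_comm (x y : M) : invariantForm G M x y = invariantForm G M y x := by
  simp only [invariantForm_apply, mul_comm]

lemma invariantForm_self_pos {x : M} (hx : x ≠ 0) : 0 < invariantForm G M x x := by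
  obtain ⟨i, hi⟩ : ∃ i, (Free.chooseBasis ℤ M).repr x i ≠ 0 := by
    by_contra! hzero
    exact hx ((Free.chooseBasis ℤ M).ext_elem fun i => by simp [hzero])
  rw [invariantForm_apply]
  refine Finset.sum_pos' (fun g _ => Finset.sum_nonneg fun j _ => mul_self_nonneg _)
    ⟨1, Finset.mem_univ _,
      Finset.sum_pos' (fun j _ => mul_self_nonneg _) ⟨i, Finset.mem_univ _, ?_⟩⟩
  simpa using mul_self_pos.mpr hi

end InvariantForm

namespace SemiInf.Ctx

variable {C : Ctx} {α β γ : C.X}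

lemma mem_pos_of_mem_simpleRoots_s13 (hα : α ∈ C.simpleRoots) : α ∈ C.pos :=
  (Finset.mem_filter.mp hα).1

lemma ne_add_of_mem_simpleRoots (hα : α ∈ C.simpleRoots) (hβ : β ∈ C.pos) (hγ : γ ∈ C.pos) :
    α ≠ β + γ :=
  fun he => (Finset.mem_filter.mp hα).2 ⟨β, hβ, γ, hγ, he⟩

namespace IsRootDatum

variable (h : C.IsRootDatum)

section Reflections

include h in
lemma eq_of_forall_smul_eq {u v : C.W} (huv : ∀ x : C.X, u • x = v • x) : u = v := by
  refine (inv_mul_eq_one.mp (h.faithful_X _ fun x => ?_)).symm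
  rw [mul_smul, huv, inv_smul_smul]

include h in
lemma pair_smul_left (w : C.W) (y : C.Y) (x : C.X) :
    C.pair (w • y) x = C.pair y (w⁻¹ • x) := by
  simpa using (h.pair_inv w⁻¹ (w • y) x).symm

/-- Junk value `1` when `γ` is not a root. -/
def refl (γ : C.X) : C.W :=
  if hγ : γ ∈ C.roots then (h.isReflection γ hγ).choose else 1

lemma refl_smul_X (hγ : γ ∈ C.roots) (x : C.X) :
    h.refl γ • x = x - C.pair (C.coroot γ) x • γ := by
  rw [refl, dif_pos hγ]
  exact (h.isReflection γ hγ).choose_spec.1 x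

lemma refl_smul_Y (hγ : γ ∈ C.roots) (y : C.Y) :
    h.refl γ • y = y - C.pair y γ • C.coroot γ := by
  rw [refl, dif_pos hγ]
  exact (h.isReflection γ hγ).choose_spec.2 y

lemma refl_smul_self (hγ : γ ∈ C.roots) : h.refl γ • γ = -γ := by
  rw [h.refl_smul_X hγ, h.coroot_self γ hγ]
  module

include h in
lemma neg_mem_roots_s13 (hγ : γ ∈ C.roots) : -γ ∈ C.roots :=
  h.refl_smul_self hγ ▸ h.roots_stable _ γ hγ

lemma refl_mul_self (hγ : γ ∈ C.roots) : h.refl γ * h.refl γ = 1 := by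
  refine h.eq_of_forall_smul_eq fun x => ?_
  rw [mul_smul, one_smul, h.refl_smul_X hγ, h.refl_smul_X hγ, map_sub, map_zsmul,
    h.coroot_self γ hγ]
  module

lemma refl_inv (hγ : γ ∈ C.roots) : (h.refl γ)⁻¹ = h.refl γ :=
  inv_eq_of_mul_eq_one_right (h.refl_mul_self hγ)

include h in
lemma coroot_neg_s13 (hγ : γ ∈ C.roots) : C.coroot (-γ) = -C.coroot γ := by
  rw [← h.refl_smul_self hγ, ← h.smul_coroot _ γ hγ, h.refl_smul_Y hγ, h.coroot_self γ hγ]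
  module

lemma refl_neg (hγ : γ ∈ C.roots) : h.refl (-γ) = h.refl γ := by
  refine h.eq_of_forall_smul_eq fun x => ?_
  rw [h.refl_smul_X (h.neg_mem_roots_s13 hγ), h.refl_smul_X hγ, h.coroot_neg_s13 hγ, map_neg,
    AddMonoidHom.neg_apply]
  module

lemma mul_refl_mul_inv (w : C.W) (hγ : γ ∈ C.roots) :
    w * h.refl γ * w⁻¹ = h.refl (w • γ) := by
  refine h.eq_of_forall_smul_eq fun x => ?_
  rw [mul_smul, mul_smul, h.refl_smul_X hγ, h.refl_smul_X (h.roots_stable w γ hγ),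
    ← h.smul_coroot w γ hγ, h.pair_smul_left, smul_sub, smul_comm w (C.pair _ _), smul_inv_smul]

end Reflections

section Form

def form : LinearMap.BilinForm ℤ C.X :=
  letI := h.free_X
  letI := h.finite_X
  invariantForm C.W C.X

lemma form_smul (w : C.W) (x y : C.X) : h.form (w • x) (w • y) = h.form x y :=
  letI := h.free_X
  letI := h.finite_X
  invariantForm_smul w x y

lemma form_comm (x y : C.X) : h.form x y = h.form y x :=
  letI := h.free_X
  letI := h.finite_X
  invariantForm_comm x y

lemma form_self_pos {x : C.X} (hx : x ≠ 0) : 0 < h.form x x :=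
  letI := h.free_X
  letI := h.finite_X
  invariantForm_self_pos hx

lemma form_root_self_pos (hγ : γ ∈ C.roots) : 0 < h.form γ γ :=
  h.form_self_pos (ne_of_mem_of_not_mem hγ h.zero_not_root)

lemma two_mul_form_root (hγ : γ ∈ C.roots) (x : C.X) :
    2 * h.form x γ = C.pair (C.coroot γ) x * h.form γ γ := by
  have := h.form_smul (h.refl γ) x γ
  rw [h.refl_smul_self hγ, h.refl_smul_X hγ] at this
  simp only [map_neg, map_sub, map_zsmul, LinearMap.sub_apply, LinearMap.smul_apply,
    smul_eq_mul] at this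
  linarith

include h in
lemma sub_mem_roots_of_pair_pos (hα : α ∈ C.roots) (hβ : β ∈ C.roots) (hne : β ≠ α)
    (hp : 0 < C.pair (C.coroot α) β) : β - α ∈ C.roots := by
  have hαβ := h.two_mul_form_root hα β
  have hβα := h.two_mul_form_root hβ α
  have hA := h.form_root_self_pos hα
  have hB := h.form_root_self_pos hβ
  rw [h.form_comm α β] at hβα
  have hq : 0 < C.pair (C.coroot β) α := by
    by_contra! hq
    nlinarith [mul_pos hp hA]
  obtain hp1 | hp2 : C.pair (C.coroot α) β = 1 ∨ 2 ≤ C.pair (C.coroot α) β := by omega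
  · simpa [h.refl_smul_X hα, hp1] using h.roots_stable (h.refl α) β hβ
  obtain hq1 | hq2 : C.pair (C.coroot β) α = 1 ∨ 2 ≤ C.pair (C.coroot β) α := by omega
  · simpa [h.refl_smul_X hβ, hq1] using h.neg_mem_roots_s13 (h.roots_stable (h.refl β) α hα)
  -- both pairings are `≥ 2`, which forces `form (β - α) (β - α) ≤ 0`
  have hself := h.form_self_pos (sub_ne_zero.mpr hne)
  simp only [map_sub, LinearMap.sub_apply, h.form_comm α β] at hself
  nlinarith

end Form

section PositiveRoots

def ht : C.X →+ ℤ := C.pair h.exists_regular_Y.choose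

lemma ht_pos (hβ : β ∈ C.pos) : 0 < h.ht β :=
  h.exists_regular_Y.choose_spec β hβ

lemma mem_pos_of_ht_pos (hγ : γ ∈ C.roots) (hht : 0 < h.ht γ) : γ ∈ C.pos := by
  refine (h.root_decomp γ hγ).resolve_right fun hneg => ?_
  have := h.ht_pos hneg
  rw [map_neg] at this
  omega

lemma pos_induction_on_ht {P : C.X → Prop}
    (ih : ∀ β ∈ C.pos, (∀ γ ∈ C.pos, h.ht γ < h.ht β → P γ) → P β) (hβ : β ∈ C.pos) : P β := by
  induction hn : (h.ht β).toNat using Nat.strong_induction_on generalizing β with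
  | _ n IH =>
    refine ih β hβ fun γ hγ hlt => IH _ ?_ hγ rfl
    have := h.ht_pos hγ
    omega

include h in
lemma pos_induction_on_add {P : C.X → Prop} (simple : ∀ α ∈ C.simpleRoots, P α)
    (add : ∀ γ ∈ C.pos, ∀ δ ∈ C.pos, P γ → P δ → P (γ + δ)) (hβ : β ∈ C.pos) : P β := by
  refine h.pos_induction_on_ht (fun β hβ IH => ?_) hβ
  by_cases hs : β ∈ C.simpleRoots
  · exact simple β hs
  obtain ⟨γ, hγ, δ, hδ, rfl⟩ : ∃ γ ∈ C.pos, ∃ δ ∈ C.pos, β = γ + δ := by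
    simpa [simpleRoots, hβ] using hs
  have := h.ht_pos hγ
  have := h.ht_pos hδ
  exact add γ hγ δ hδ (IH γ hγ (by rw [map_add]; omega)) (IH δ hδ (by rw [map_add]; omega))

include h in
lemma le_pair_of_forall_simpleRoots {μ : C.Y} {N : ℤ} (hN : 0 ≤ N)
    (hμ : ∀ α ∈ C.simpleRoots, N ≤ C.pair μ α) (hβ : β ∈ C.pos) : N ≤ C.pair μ β :=
  h.pos_induction_on_add hμ (fun _ _ _ _ hγ hδ => by rw [map_add]; omega) hβ

lemma exists_simpleRoots_form_pos (x : C.X) (hβ : β ∈ C.pos) (hx : 0 < h.form x β) :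
    ∃ α ∈ C.simpleRoots, 0 < h.form x α := by
  refine h.pos_induction_on_add
    (P := fun β => 0 < h.form x β → ∃ α ∈ C.simpleRoots, 0 < h.form x α)
    (fun α hα hx => ⟨α, hα, hx⟩) (fun γ _ δ _ hγ hδ hx => ?_) hβ hx
  rw [map_add] at hx
  rcases lt_or_ge 0 (h.form x γ) with hxγ | hxγ
  · exact hγ hxγ
  · exact hδ (by omega)

include h in
lemma exists_simpleRoots_pair_pos (hβ : β ∈ C.pos) :
    ∃ α ∈ C.simpleRoots, 0 < C.pair (C.coroot α) β := by
  obtain ⟨α, hα, hβα⟩ :=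
    h.exists_simpleRoots_form_pos β hβ (h.form_root_self_pos (h.pos_subset hβ))
  have hαr := h.pos_subset (mem_pos_of_mem_simpleRoots_s13 hα)
  have := h.two_mul_form_root hαr β
  have := h.form_root_self_pos hαr
  exact ⟨α, hα, by nlinarith⟩

include h in
/-- Induction down the `α`-string through `β`: a counterexample would exhibit `α` as the sum of
two positive roots. -/
lemma nsmul_sub_not_mem_pos (hα : α ∈ C.simpleRoots) (hβ : β ∈ C.pos) (hne : β ≠ α) (k : ℕ) :
    k • α - β ∉ C.pos := by
  induction k generalizing β with
  | zero => simpa using h.pos_neg_disjoint β hβ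
  | succ k ih =>
    intro hγ
    have hαr := h.pos_subset (mem_pos_of_mem_simpleRoots_s13 hα)
    have hβr := h.pos_subset hβ
    rcases lt_or_ge 0 (C.pair (C.coroot α) β) with hp | hp
    · have hsub := h.sub_mem_roots_of_pair_pos hαr hβr hne hp
      have hsub_pos : β - α ∈ C.pos := by
        refine (h.root_decomp _ hsub).resolve_right fun hneg => ?_
        exact ne_add_of_mem_simpleRoots hα hβ (by simpa using hneg) (by abel)
      have hsub_ne : β - α ≠ α := by
        intro he
        have h2α : (2 : ℤ) • α = β := by
          rw [two_zsmul]
          nth_rw 1 [← he]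
          exact sub_add_cancel β α
        have := h.reduced α hαr 2 (h2α ▸ hβr)
        omega
      exact ih hsub_pos hsub_ne (by convert hγ using 1; rw [succ_nsmul]; abel)
    · have hγr := h.pos_subset hγ
      have hγα : (k + 1) • α - β ≠ α := by
        intro he
        have hβk : β = (k : ℤ) • α := by
          rw [sub_eq_iff_eq_add, succ_nsmul] at he
          rw [natCast_zsmul, add_right_cancel (he.trans (add_comm α β))]
        have := h.reduced α hαr k (hβk ▸ hβr)
        exact hne (by rw [hβk, show (k : ℤ) = 1 by omega, one_smul])
      have hpair : 0 < C.pair (C.coroot α) ((k + 1) • α - β) := by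
        rw [map_sub, map_nsmul, h.coroot_self α hαr, nsmul_eq_mul]
        push_cast
        omega
      rcases h.root_decomp _ (h.sub_mem_roots_of_pair_pos hαr hγr hγα hpair) with hpos | hneg
      · exact ih hβ hne (by convert hpos using 1; rw [succ_nsmul]; abel)
      · exact ne_add_of_mem_simpleRoots hα hγ hneg (by rw [succ_nsmul]; abel)

lemma refl_smul_mem_pos (hα : α ∈ C.simpleRoots) (hβ : β ∈ C.pos) (hne : β ≠ α) :
    h.refl α • β ∈ C.pos := by
  have hαp := mem_pos_of_mem_simpleRoots_s13 hα
  have hroot := h.roots_stable (h.refl α) β (h.pos_subset hβ)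
  rw [h.refl_smul_X (h.pos_subset hαp)] at hroot ⊢
  rcases le_or_gt (C.pair (C.coroot α) β) 0 with hp | hp
  · refine h.mem_pos_of_ht_pos hroot ?_
    rw [map_sub, map_zsmul, smul_eq_mul]
    nlinarith [h.ht_pos hαp, h.ht_pos hβ]
  · refine (h.root_decomp _ hroot).resolve_right fun hneg =>
      h.nsmul_sub_not_mem_pos hα hβ hne (C.pair (C.coroot α) β).toNat ?_
    rwa [← natCast_zsmul, Int.toNat_of_nonneg hp.le, ← neg_sub]

end PositiveRoots

section Words

def wordProd (l : List C.X) : C.W := (l.map h.refl).prod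

@[simp] lemma wordProd_nil : h.wordProd [] = 1 := rfl

@[simp] lemma wordProd_cons (γ : C.X) (l : List C.X) :
    h.wordProd (γ :: l) = h.refl γ * h.wordProd l := by
  simp [wordProd]

@[simp] lemma wordProd_append (l l' : List C.X) :
    h.wordProd (l ++ l') = h.wordProd l * h.wordProd l' := by
  simp [wordProd]

lemma exists_wordProd_eq_refl (hγ : γ ∈ C.roots) :
    ∃ l : List C.X, (∀ α ∈ l, α ∈ C.simpleRoots) ∧ h.wordProd l = h.refl γ := by
  suffices hpos : ∀ β ∈ C.pos,
      ∃ l : List C.X, (∀ α ∈ l, α ∈ C.simpleRoots) ∧ h.wordProd l = h.refl β by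
    rcases h.root_decomp γ hγ with hγ' | hγ'
    · exact hpos γ hγ'
    · simpa [h.refl_neg hγ] using hpos (-γ) hγ'
  refine fun β hβ => h.pos_induction_on_ht
    (P := fun β => ∃ l : List C.X, (∀ α ∈ l, α ∈ C.simpleRoots) ∧ h.wordProd l = h.refl β)
    (fun β hβ IH => ?_) hβ
  by_cases hs : β ∈ C.simpleRoots
  · exact ⟨[β], by simpa using hs, by simp⟩
  obtain ⟨α, hα, hp⟩ := h.exists_simpleRoots_pair_pos hβ
  have hαr := h.pos_subset (mem_pos_of_mem_simpleRoots_s13 hα)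
  have hβ' := h.refl_smul_mem_pos hα hβ (by rintro rfl; exact hs hα)
  obtain ⟨l, hl, hlβ⟩ := IH _ hβ' (by
    rw [h.refl_smul_X hαr, map_sub, map_zsmul, smul_eq_mul]
    nlinarith [h.ht_pos (mem_pos_of_mem_simpleRoots_s13 hα)])
  refine ⟨α :: l ++ [α], by simpa [or_imp, forall_and, hα] using hl, ?_⟩
  have hconj := h.mul_refl_mul_inv (h.refl α) (h.pos_subset hβ')
  rw [← mul_smul, h.refl_mul_self hαr, one_smul, h.refl_inv hαr] at hconj
  rw [← hconj]
  simp [hlβ, mul_assoc]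

lemma exists_wordProd_eq (w : C.W) :
    ∃ l : List C.X, (∀ α ∈ l, α ∈ C.simpleRoots) ∧ h.wordProd l = w := by
  have refl_of_mem : ∀ s ∈ {s : C.W | ∃ α ∈ C.roots,
      (∀ x : C.X, s • x = x - C.pair (C.coroot α) x • α) ∧
      (∀ y : C.Y, s • y = y - C.pair y α • C.coroot α)}, ∃ α ∈ C.roots, s = h.refl α := by
    rintro s ⟨α, hα, hsx, -⟩
    exact ⟨α, hα, h.eq_of_forall_smul_eq fun x => by rw [hsx, h.refl_smul_X hα]⟩
  induction h.weyl_gen w using Subgroup.closure_induction'' with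
  | mem s hs =>
    obtain ⟨α, hα, rfl⟩ := refl_of_mem s hs
    exact h.exists_wordProd_eq_refl hα
  | inv_mem s hs =>
    obtain ⟨α, hα, rfl⟩ := refl_of_mem s hs
    rw [h.refl_inv hα]
    exact h.exists_wordProd_eq_refl hα
  | one => exact ⟨[], by simp, rfl⟩
  | mul u v _ _ hu hv =>
    obtain ⟨l, hl, rfl⟩ := hu
    obtain ⟨l', hl', rfl⟩ := hv
    exact ⟨l ++ l', fun α hα => (List.mem_append.mp hα).elim (hl α) (hl' α), by simp⟩

/-- The exchange condition. -/
lemma exists_shorter_wordProd (hα : α ∈ C.simpleRoots) :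
    ∀ l : List C.X, (∀ γ ∈ l, γ ∈ C.simpleRoots) → -(h.wordProd l • α) ∈ C.pos →
      ∃ l' : List C.X, (∀ γ ∈ l', γ ∈ C.simpleRoots) ∧ l'.length < l.length ∧
        h.wordProd l' = h.wordProd l * h.refl α
  | [], _, hneg => by
    simp only [wordProd_nil, one_smul] at hneg
    exact absurd hneg (h.pos_neg_disjoint α (mem_pos_of_mem_simpleRoots_s13 hα))
  | γ :: l, hl, hneg => by
    have hαr := h.pos_subset (mem_pos_of_mem_simpleRoots_s13 hα)
    by_cases hl_neg : -(h.wordProd l • α) ∈ C.pos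
    · obtain ⟨l', hl', hlen, heq⟩ :=
        exists_shorter_wordProd hα l (fun γ hγ => hl γ (by simp [hγ])) hl_neg
      exact ⟨γ :: l', by simp_all, by simpa using hlen, by simp [heq, mul_assoc]⟩
    -- otherwise `s_γ` is the reflection that turns the positive root `w_l α` negative,
    -- so `w_l α = γ` and `s_γ w_l = w_l s_α`
    have hγ : γ ∈ C.simpleRoots := hl γ (by simp)
    have hlα : h.wordProd l • α ∈ C.pos :=
      (h.root_decomp _ (h.roots_stable _ α hαr)).resolve_right hl_neg
    have hγ_eq : h.wordProd l • α = γ := by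
      by_contra hne
      rw [wordProd_cons, mul_smul] at hneg
      exact h.pos_neg_disjoint _ (h.refl_smul_mem_pos hγ hlα hne) hneg
    refine ⟨l, fun γ hγ => hl γ (by simp [hγ]), by simp, ?_⟩
    rw [wordProd_cons, ← hγ_eq, ← h.mul_refl_mul_inv _ hαr]
    simp [mul_assoc, h.refl_mul_self hαr]

end Words

include h in
lemma le_pair_sub_smul {μ : C.Y} {ξ : C.X} {N : ℤ} (hN : 0 ≤ N)
    (hμ : ∀ β ∈ C.pos, N ≤ C.pair μ β) (hξ : ∀ α ∈ C.simpleRoots, 0 < C.pair (C.coroot α) ξ)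
    {w : C.W} (hw : w ≠ 1) : N ≤ C.pair μ (ξ - w • ξ) := by
  obtain ⟨l, hl, rfl⟩ := h.exists_wordProd_eq w
  induction hn : l.length using Nat.strong_induction_on generalizing l with
  | _ n IH =>
    rcases l.eq_nil_or_concat' with rfl | ⟨l, α, rfl⟩
    · exact absurd rfl hw
    have hα : α ∈ C.simpleRoots := hl α (by simp)
    have hl' : ∀ γ ∈ l, γ ∈ C.simpleRoots := fun γ hγ => hl γ (by simp [hγ])
    have hαr := h.pos_subset (mem_pos_of_mem_simpleRoots_s13 hα)
    have hlen : l.length < n := by simp [← hn]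
    rw [wordProd_append] at hw ⊢
    by_cases hneg : -(h.wordProd l • α) ∈ C.pos
    · obtain ⟨l', hl'', hlen', heq⟩ := h.exists_shorter_wordProd hα l hl' hneg
      simp only [wordProd_cons, wordProd_nil, mul_one] at hw ⊢
      rw [← heq] at hw ⊢
      exact IH _ (hlen'.trans hlen) l' hl'' hw rfl
    have hlα : h.wordProd l • α ∈ C.pos :=
      (h.root_decomp _ (h.roots_stable _ α hαr)).resolve_right hneg
    have hsplit : ξ - (h.wordProd l * h.wordProd [α]) • ξ =
        (ξ - h.wordProd l • ξ) + C.pair (C.coroot α) ξ • h.wordProd l • α := by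
      rw [wordProd_cons, wordProd_nil, mul_one, mul_smul, h.refl_smul_X hαr, smul_sub,
        smul_comm _ (C.pair _ _)]
      abel
    have hprev : 0 ≤ C.pair μ (ξ - h.wordProd l • ξ) := by
      by_cases hl1 : h.wordProd l = 1
      · simp [hl1]
      · exact hN.trans (IH _ hlen l hl' hl1 rfl)
    rw [hsplit, map_add, map_zsmul, smul_eq_mul]
    nlinarith [hμ _ hlα, hξ α hα]

end IsRootDatum

open TensorProduct

def pairQ (ξ : C.X) : C.QY →ₗ[ℤ] ℚ :=
  TensorProduct.lift
    ((LinearMap.mul ℤ ℚ).compl₂ ((Int.castAddHom ℚ).comp (C.pair.flip ξ)).toIntLinearMap)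

lemma pairQ_tmul (ξ : C.X) (q : ℚ) (y : C.Y) : C.pairQ ξ (q ⊗ₜ y) = q * C.pair y ξ :=
  lift.tmul _ _

lemma pairQ_ι (ξ : C.X) (y : C.Y) : C.pairQ ξ (C.ι y) = C.pair y ξ := by
  change C.pairQ ξ ((1 : ℚ) ⊗ₜ y) = _
  rw [pairQ_tmul, one_mul]

lemma pairQ_rhoCheck (ξ : C.X) :
    C.pairQ ξ C.rhoCheck = C.pair (∑ β ∈ C.posCoroots, β) ξ / 2 := by
  rw [rhoCheck, pairQ_tmul, inv_mul_eq_div]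

lemma pairQ_actQ (h : C.IsRootDatum) (ξ : C.X) (w : C.W) (v : C.QY) :
    C.pairQ ξ (C.actQ w v) = C.pairQ (w⁻¹ • ξ) v := by
  induction v using TensorProduct.induction_on with
  | zero => simp
  | tmul q y =>
    change C.pairQ ξ (q ⊗ₜ (w • y)) = _
    rw [pairQ_tmul, pairQ_tmul, h.pair_smul_left]
  | add v v' hv hv' => rw [map_add, map_add, hv, hv', map_add]

lemma pairQ_nonneg_of_mem_closure {ξ : C.X} (hξ : ∀ α ∈ C.pos, 0 ≤ C.pair (C.coroot α) ξ)
    {v : C.QY} (hv : v ∈ AddSubmonoid.closure (⇑C.ι '' ↑C.posCoroots)) : 0 ≤ C.pairQ ξ v := by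
  induction hv using AddSubmonoid.closure_induction with
  | mem v hv =>
    obtain ⟨_, hβ, rfl⟩ := hv
    obtain ⟨α, hα, rfl⟩ := Finset.mem_image.mp hβ
    rw [pairQ_ι]
    exact_mod_cast hξ α hα
  | zero => simp
  | add v v' _ _ hv hv' => rw [map_add]; exact add_nonneg hv hv'

end SemiInf.Ctx

/-- For every `η ∈ Y` there is `N` such that for every `μ ∈ Y` with
`⟨μ,α⟩ ≥ N` for all simple roots `α`, and every `w ∈ W_f` with `w ≠ 1`, the
element `w(μ+ρ∨) − (μ+η+ρ∨)` of `ℚ ⊗ Y` is not a `ℤ≥0`-linear combination of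
positive coroots. -/
theorem statement13 (C : SemiInf.Ctx) (h : C.IsRootDatum) (η : C.Y) :
    ∃ N : ℕ, ∀ μ : C.Y, (∀ α ∈ C.simpleRoots, (N : ℤ) ≤ C.pair μ α) →
      ∀ w : C.W, w ≠ 1 →
        C.actQ w (C.ι μ + C.rhoCheck) - (C.ι μ + C.ι η + C.rhoCheck) ∉
          AddSubmonoid.closure (⇑C.ι '' ↑C.posCoroots) := by
  obtain ⟨ξ, hξ⟩ := h.exists_regular_X
  set S := ∑ β ∈ C.posCoroots, β
  set M := Finset.univ.sup fun w : C.W => (C.pair S (ξ - w • ξ)).natAbs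
  refine ⟨M + (C.pair η ξ).natAbs + 1, fun μ hμ w hw hmem => ?_⟩
  have hgap := h.le_pair_sub_smul (by positivity)
    (fun β hβ => h.le_pair_of_forall_simpleRoots (by positivity) hμ hβ)
    (fun α hα => hξ α (SemiInf.Ctx.mem_pos_of_mem_simpleRoots_s13 hα)) (inv_ne_one.mpr hw)
  have hM : (C.pair S (ξ - w⁻¹ • ξ)).natAbs ≤ M :=
    Finset.le_sup (f := fun w : C.W => (C.pair S (ξ - w • ξ)).natAbs) (Finset.mem_univ w⁻¹)
  have hnonneg := C.pairQ_nonneg_of_mem_closure (fun α hα => (hξ α hα).le) hmem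
  simp only [map_sub, C.pairQ_actQ h, map_add, C.pairQ_ι, C.pairQ_rhoCheck] at hnonneg
  have hS : |C.pair S (ξ - w⁻¹ • ξ)| ≤ M := by rw [← Int.natCast_natAbs]; exact_mod_cast hM
  rw [map_sub] at hgap hS
  have hS' := (abs_le.mp hS).1
  have hη := neg_abs_le (C.pair η ξ)
  push_cast at hgap
  qify at hgap hS' hη
  linarith
end
end

section
/- Let 𝒜 be a Grothendieck abelian category in which every nonzero object admits a simple subobject. If G is an object of 𝒜 such that every short exact sequence 0 → G → E → S → 0 with S simple splits, then G is an injective object of 𝒜. -/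
/-!
Zorn's lemma applies to extensions of `f : X ⟶ G` along `X ⟶ Y` to subobjects of `Y`: by AB5 a
filtered colimit of subobjects of `Y` is again a subobject, so chains have upper bounds. An
extension to `Z ≠ ⊤` is never maximal. Since every nonzero object has a simple subobject, `Y / Z`
contains some simple `S`, whose preimage `E ⊆ Y` satisfies `E / Z ≅ S`. Pushing out
`0 → Z → E → S → 0` along `Z ⟶ G` gives an extension of `S` by `G`, and a retraction of it
extends the map from `Z` to `E`.
-/

open CategoryTheory Limits

universe w v u

namespace CategoryTheory

section

variable {A : Type u} [Category.{v} A] {G X Y : A} (i : X ⟶ Y) [Mono i] (f : X ⟶ G)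

structure PartialExtension where
  Z : Subobject Y
  g : (Z : A) ⟶ G
  le : Subobject.mk i ≤ Z
  comm : Subobject.ofMkLE i Z le ≫ g = f

namespace PartialExtension

variable {i f}

instance : Preorder (PartialExtension i f) where
  le p q := ∃ h : p.Z ≤ q.Z, Subobject.ofLE _ _ h ≫ q.g = p.g
  le_refl p := ⟨le_rfl, by simp [Subobject.ofLE_refl]⟩
  le_trans p q r := by
    rintro ⟨h₁, e₁⟩ ⟨h₂, e₂⟩
    exact ⟨h₁.trans h₂, by rw [← Subobject.ofLE_comp_ofLE _ _ _ h₁ h₂, Category.assoc, e₂, e₁]⟩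

instance : Nonempty (PartialExtension i f) :=
  ⟨⟨Subobject.mk i, (Subobject.underlyingIso i).hom ≫ f, le_rfl, by
    simp [Subobject.ofMkLE, Subobject.ofLE_refl]⟩⟩

instance [LocallySmall.{w} A] [WellPowered.{w} A] : Small.{w} (PartialExtension i f) :=
  small_of_injective (f := fun p => (⟨p.Z, p.g⟩ : Σ Z : Subobject Y, (Z : A) ⟶ G)) <| by
    rintro ⟨Z₁, g₁, _, _⟩ ⟨Z₂, g₂, _, _⟩ h
    obtain ⟨rfl, ⟨⟩⟩ := Sigma.mk.inj_iff.1 h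
    rfl

def enlarge (p : PartialExtension i f) {Z' : Subobject Y} (h : p.Z ≤ Z') (g' : (Z' : A) ⟶ G)
    (hg : Subobject.ofLE _ _ h ≫ g' = p.g) : PartialExtension i f where
  Z := Z'
  g := g'
  le := p.le.trans h
  comm := by rw [← Subobject.ofMkLE_comp_ofLE i _ _ p.le h, Category.assoc, hg, p.comm]

lemma le_enlarge (p : PartialExtension i f) {Z' : Subobject Y} (h : p.Z ≤ Z')
    (g' : (Z' : A) ⟶ G) (hg : Subobject.ofLE _ _ h ≫ g' = p.g) : p ≤ p.enlarge h g' hg :=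
  ⟨h, hg⟩

lemma bddAbove_range [Abelian A] [IsGrothendieckAbelian.{w} A] {J : Type w} [Preorder J]
    [IsDirected J (· ≤ ·)] [Nonempty J] (p : J → PartialExtension i f) (hp : Monotone p) :
    BddAbove (Set.range p) := by
  have hZ : Monotone fun j => (p j).Z := fun j k h => (hp h).1
  let D : J ⥤ A := hZ.functor ⋙ Subobject.underlying
  let cY : Cocone D :=
    { pt := Y
      ι.app j := (p j).Z.arrow
      ι.naturality _ _ _ := (Subobject.ofLE_arrow _).trans (Category.comp_id _).symm }
  let cG : Cocone D :=
    { pt := G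
      ι.app j := (p j).g
      ι.naturality _ _ h := (hp (leOfHom h)).2.trans (Category.comp_id _).symm }
  let t := colimit.desc D cY
  have : Mono t := IsGrothendieckAbelian.mono_of_isColimit_monoOver
    (hZ.functor ⋙ Subobject.representative) (colimit.isColimit D) t (colimit.ι_desc cY)
  have hle (j : J) : (p j).Z ≤ Subobject.mk t :=
    Subobject.le_mk_of_comm (colimit.ι D j) (colimit.ι_desc cY j)
  have hι (j : J) : Subobject.ofLEMk _ t (hle j) = colimit.ι D j :=
    (cancel_mono t).1 ((Subobject.ofLEMk_comp _).trans (colimit.ι_desc cY j).symm)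
  have hg (j : J) : Subobject.ofLE _ _ (hle j) ≫ (Subobject.underlyingIso t).hom ≫
      colimit.desc D cG = (p j).g := by
    rw [← Category.assoc]
    exact (congrArg (· ≫ colimit.desc D cG) (hι j)).trans (colimit.ι_desc cG j)
  let j₀ : J := Classical.arbitrary J
  exact ⟨(p j₀).enlarge (hle j₀) _ (hg j₀), by rintro _ ⟨j, rfl⟩; exact ⟨hle j, hg j⟩⟩

lemma bddAbove_of_isChain [Abelian A] [IsGrothendieckAbelian.{w} A]
    (c : Set (PartialExtension i f)) (hc : IsChain (· ≤ ·) c) (hne : c.Nonempty) : BddAbove c := by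
  have : Nonempty (Shrink.{w} c) := ⟨equivShrink c ⟨_, hne.some_mem⟩⟩
  have : IsDirected (Shrink.{w} c) (· ≤ ·) := ⟨fun a b => by
    obtain ⟨a, rfl⟩ := (equivShrink c).surjective a
    obtain ⟨b, rfl⟩ := (equivShrink c).surjective b
    rcases hc.total a.2 b.2 with h | h
    · exact ⟨equivShrink c b, equivShrink_le_equivShrink.2 h, le_rfl⟩
    · exact ⟨equivShrink c a, le_rfl, equivShrink_le_equivShrink.2 h⟩⟩
  refine (bddAbove_range (fun j => ((equivShrink c).symm j).1) fun _ _ h => h).mono ?_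
  intro p hp
  exact ⟨equivShrink c ⟨p, hp⟩, by simp⟩

lemma exists_comp_eq_of_isIso_arrow (p : PartialExtension i f) [IsIso p.Z.arrow] :
    ∃ h : Y ⟶ G, i ≫ h = f := by
  have hi : i ≫ inv p.Z.arrow = Subobject.ofMkLE i p.Z p.le := by
    simp [← cancel_mono p.Z.arrow]
  exact ⟨inv p.Z.arrow ≫ p.g, by rw [← Category.assoc, hi, p.comm]⟩

end PartialExtension

end

variable {A : Type u} [Category.{v} A] [Abelian A]

theorem injective_of_forall_exists_extension_step [IsGrothendieckAbelian.{w} A] {G : A}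
    (hstep : ∀ {Z Y : A} (m : Z ⟶ Y), Mono m → ¬ IsIso m → ∃ (E : A) (u : Z ⟶ E) (e : E ⟶ Y),
      Mono e ∧ u ≫ e = m ∧ ¬ IsIso u ∧ ∀ g : Z ⟶ G, ∃ g' : E ⟶ G, u ≫ g' = g) :
    Injective G := by
  refine ⟨fun {X Y} f i _ => ?_⟩
  obtain ⟨p, hp⟩ := zorn_le_nonempty (α := PartialExtension i f)
    fun c hc hne => PartialExtension.bddAbove_of_isChain c hc hne
  suffices IsIso p.Z.arrow from p.exists_comp_eq_of_isIso_arrow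
  by_contra hZ
  obtain ⟨E, u, e, _, hfac, hu, hext⟩ := hstep p.Z.arrow inferInstance hZ
  obtain ⟨g, hg⟩ := hext p.g
  have hle : p.Z ≤ Subobject.mk e := Subobject.le_mk_of_comm u hfac
  have hofLEMk : Subobject.ofLEMk _ e hle = u :=
    (cancel_mono e).1 (by rw [Subobject.ofLEMk_comp, hfac])
  have hlt : p.Z < Subobject.mk e := by
    simpa only [Subobject.mk_arrow] using Subobject.mk_lt_mk_of_comm u hfac hu
  obtain ⟨hge, -⟩ := hp (p.le_enlarge hle ((Subobject.underlyingIso e).hom ≫ g)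
    (by rw [← Category.assoc]; exact (congrArg (· ≫ g) hofLEMk).trans hg))
  exact hlt.not_ge hge

lemma exists_comp_eq_of_simple_cokernel {G : A}
    (hG : ∀ {E : A} (j : G ⟶ E), Mono j → Simple (cokernel j) → ∃ r : E ⟶ G, j ≫ r = 𝟙 G)
    {Z E : A} (u : Z ⟶ E) [Mono u] [Simple (cokernel u)] (g : Z ⟶ G) :
    ∃ g' : E ⟶ G, u ≫ g' = g := by
  have sq := (IsPushout.of_hasPushout g u).flip
  have := isIso_cokernel_map_of_isPushout sq
  obtain ⟨r, hr⟩ := hG (pushout.inl g u) inferInstance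
    (Simple.of_iso (asIso (cokernel.map _ _ _ _ sq.w)).symm)
  exact ⟨pushout.inr g u ≫ r, by rw [← Category.assoc, ← pushout.condition, Category.assoc, hr,
    Category.comp_id]⟩

lemma not_isIso_of_simple_cokernel {Z E : A} (u : Z ⟶ E) [Simple (cokernel u)] : ¬ IsIso u :=
  fun _ => Simple.not_isZero (cokernel u) (isZero_cokernel_of_epi u)

lemma exists_factorization_simple_cokernel
    (hsimple : ∀ X : A, ¬ IsZero X → ∃ (S : A) (f : S ⟶ X), Simple S ∧ Mono f)
    {Z Y : A} (m : Z ⟶ Y) [Mono m] (hm : ¬ IsIso m) :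
    ∃ (E : A) (u : Z ⟶ E) (e : E ⟶ Y), Mono u ∧ Mono e ∧ u ≫ e = m ∧ Simple (cokernel u) := by
  have hQ : ¬ IsZero (cokernel m) := fun h =>
    hm (have := Abelian.epi_of_cokernel_π_eq_zero m (h.eq_of_tgt _ _); isIso_of_mono_of_epi m)
  obtain ⟨S, s, _, _⟩ := hsimple _ hQ
  let u : Z ⟶ pullback (cokernel.π m) s := pullback.lift m 0 (by simp)
  have hu : u ≫ pullback.fst _ _ = m := pullback.lift_fst _ _ _
  have hu' : u ≫ pullback.snd _ _ = 0 := pullback.lift_snd _ _ _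
  have hex : (ShortComplex.mk u (pullback.snd _ _) hu').Exact := by
    rw [ShortComplex.exact_iff_exact_up_to_refinements]
    intro T x (hx : x ≫ pullback.snd _ _ = 0)
    have hxm : (x ≫ pullback.fst _ _) ≫ cokernel.π m = 0 := by
      rw [Category.assoc, pullback.condition, reassoc_of% hx, zero_comp]
    obtain ⟨y, hy⟩ : ∃ y, y ≫ m = x ≫ pullback.fst _ _ :=
      ⟨_, (ShortComplex.exact_cokernel m).lift_f _ hxm⟩
    exact ⟨T, 𝟙 T, inferInstance, y, pullback.hom_ext (by simp [hu, hy]) (by simp [hu', hx])⟩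
  exact ⟨_, u, pullback.fst _ _, mono_of_mono_fac hu, inferInstance, hu,
    Simple.of_iso (Y := S) ((cokernelIsCokernel u).coconePointUniqueUpToIso hex.gIsCokernel)⟩

end CategoryTheory

/-- Let `𝒜` be a Grothendieck abelian category (abelian, cocomplete, with
exact filtered colimits (AB5) and a separator) in which every nonzero object
admits a simple subobject. If `G` is an object such that every short exact
sequence `0 → G → E → S → 0` with `S` simple splits, then `G` is injective. -/
theorem statement15 {A : Type u} [Category.{v} A] [Abelian A]
    [HasColimits A] [AB5 A] [HasSeparator A]
    (hsimple : ∀ X : A, ¬ IsZero X → ∃ (S : A) (f : S ⟶ X), Simple S ∧ Mono f)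
    (G : A)
    (hsplit : ∀ (E S : A) (f : G ⟶ E) (g : E ⟶ S) (w : f ≫ g = 0),
      Mono f → Epi g → (ShortComplex.mk f g w).Exact → Simple S →
      ∃ r : E ⟶ G, f ≫ r = 𝟙 G) :
    Injective G := by
  have : IsGrothendieckAbelian.{v} A := {}
  have hG {E : A} (j : G ⟶ E) (hj : Mono j) (hS : Simple (cokernel j)) :
      ∃ r : E ⟶ G, j ≫ r = 𝟙 G :=
    hsplit E _ j (cokernel.π j) (cokernel.condition j) hj inferInstance
      (ShortComplex.exact_of_g_is_cokernel _ (cokernelIsCokernel j)) hS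
  refine injective_of_forall_exists_extension_step fun m _ hm => ?_
  obtain ⟨E, u, e, _, he, hfac, _⟩ := exists_factorization_simple_cokernel hsimple m hm
  exact ⟨E, u, e, he, hfac, not_isIso_of_simple_cokernel u,
    exists_comp_eq_of_simple_cokernel hG u⟩
end
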